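/- arXiv:2301.13642 — 10 statements merged into one kernel-verified Lean document; each statement's English description precedes it below -/
import Mathlib

section
/- Let S be a finite nonempty set, let p ∈ (1,∞) be real with Hölder conjugate q = p/(p−1), let v ∈ ℝ^S and ε > 0. Then the minimum of ⟨c, v⟩ = ∑_{s∈S} c(s)v(s) over all c ∈ ℝ^S satisfying ‖c‖_p ≤ ε and ∑_{s∈S} c(s) = 0 equals −ε·κ_q(v). -/
/-!
Since `∑ c = 0`, `⟨c, v⟩ = ⟨c, v - ω⟩` for every `ω`, so Hölder's inequality gives
`⟨c, v⟩ ≥ -ε ‖v - ω‖_q`. For equality, let `ω₀` minimise `ω ↦ ‖v - ω‖_q^q` (it exists by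
coercivity). Its first-order condition says that the Hölder dual `φ(v - ω₀)` of `v - ω₀`, where
`φ(x) = |x|^(q-2) x`, sums to zero, so the suitably rescaled `-φ(v - ω₀)` is an admissible `c`
attaining `-ε ‖v - ω₀‖_q`.
-/

open Finset Filter Real

section

variable {S : Type*} [Fintype S]

lemma sum_mul_sub_const_of_sum_eq_zero {c : S → ℝ} (hc : ∑ s, c s = 0) (v : S → ℝ) (ω : ℝ) :
    ∑ s, c s * (v s - ω) = ∑ s, c s * v s := by
  simp only [mul_sub, sum_sub_distrib, ← sum_mul, hc, zero_mul, sub_zero]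

lemma neg_mul_Lq_norm_le_sum_mul {p q ε : ℝ} (hpq : p.HolderConjugate q) {c : S → ℝ}
    (hc : ∑ s, c s = 0) (hcε : (∑ s, |c s| ^ p) ^ (1 / p) ≤ ε) (v : S → ℝ) (ω : ℝ) :
    -ε * (∑ s, |v s - ω| ^ q) ^ (1 / q) ≤ ∑ s, c s * v s := by
  have hHolder := inner_le_Lp_mul_Lq univ (fun s => -c s) (fun s => v s - ω) hpq
  simp only [neg_mul, sum_neg_distrib, abs_neg, sum_mul_sub_const_of_sum_eq_zero hc] at hHolder
  have hnorm := mul_le_mul_of_nonneg_right hcε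
    (by positivity : (0 : ℝ) ≤ (∑ s, |v s - ω| ^ q) ^ (1 / q))
  linarith

lemma abs_rpow_sub_two_mul_self_mul_self {q : ℝ} (hq : 1 < q) (x : ℝ) :
    |x| ^ (q - 2) * x * x = |x| ^ q := by
  rw [mul_assoc, ← abs_mul_abs_self, ← mul_assoc, ← rpow_add_one' (abs_nonneg x) (by linarith),
    ← rpow_add_one' (abs_nonneg x) (by linarith)]
  ring_nf

lemma abs_rpow_sub_two_mul_self_rpow_conj {p q : ℝ} (hpq : p.HolderConjugate q) (x : ℝ) :
    |(|x| ^ (q - 2) * x)| ^ p = |x| ^ q := by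
  rw [abs_mul, abs_of_nonneg (rpow_nonneg (abs_nonneg x) _),
    ← rpow_add_one' (abs_nonneg x) (by linarith [hpq.symm.lt]), ← rpow_mul (abs_nonneg x),
    show q - 2 + 1 = q - 1 by ring, hpq.symm.sub_one_mul_conj]

lemma exists_sum_eq_zero_sum_mul_eq_neg_mul_Lq_norm {p q ε : ℝ} (hpq : p.HolderConjugate q)
    (hε : 0 ≤ ε) {u : S → ℝ} (hu : ∑ s, |u s| ^ (q - 2) * u s = 0) :
    ∃ c : S → ℝ, (∑ s, |c s| ^ p) ^ (1 / p) ≤ ε ∧ ∑ s, c s = 0 ∧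
      ∑ s, c s * u s = -ε * (∑ s, |u s| ^ q) ^ (1 / q) := by
  set K := (∑ s, |u s| ^ q) ^ (1 / q)
  have hK : 0 ≤ K := by positivity
  have hKq : K ^ q = ∑ s, |u s| ^ q := by
    rw [← rpow_mul (by positivity), one_div_mul_cancel hpq.symm.ne_zero, rpow_one]
  set a := ε / K ^ (q - 1)
  have ha : 0 ≤ a := by positivity
  refine ⟨fun s => -a * (|u s| ^ (q - 2) * u s), ?_, ?_, ?_⟩
  · have hterm : ∀ s, |-a * (|u s| ^ (q - 2) * u s)| ^ p = a ^ p * |u s| ^ q := fun s => by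
      rw [abs_mul, abs_neg, abs_of_nonneg ha, mul_rpow ha (abs_nonneg _),
        abs_rpow_sub_two_mul_self_rpow_conj hpq]
    have hap : a ^ p = ε ^ p / K ^ q := by
      rw [div_rpow hε (rpow_nonneg hK _), ← rpow_mul hK, hpq.symm.sub_one_mul_conj]
    have hle : a ^ p * K ^ q ≤ ε ^ p := by
      rcases eq_or_ne (K ^ q) 0 with h | h
      · rw [h, mul_zero]; positivity
      · rw [hap, div_mul_cancel₀ _ h]
    calc (∑ s, |-a * (|u s| ^ (q - 2) * u s)| ^ p) ^ (1 / p)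
        ≤ (ε ^ p) ^ (1 / p) := by
          rw [sum_congr rfl fun s _ => hterm s, ← mul_sum, ← hKq]
          exact rpow_le_rpow (by positivity) hle hpq.one_div_nonneg
      _ = ε := by rw [← rpow_mul hε, mul_one_div_cancel hpq.ne_zero, rpow_one]
  · rw [← mul_sum, hu, mul_zero]
  · calc ∑ s, -a * (|u s| ^ (q - 2) * u s) * u s = -ε * (K ^ q / K ^ (q - 1)) := by
          simp only [mul_assoc, ← mul_sum, abs_rpow_sub_two_mul_self_mul_self hpq.symm.lt, hKq, a]
          ring
      _ = -ε * K := by rw [← rpow_sub' hK (by norm_num), sub_sub_cancel, rpow_one]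

lemma tendsto_sum_abs_sub_rpow_cocompact [Nonempty S] {q : ℝ} (hq : 0 < q) (v : S → ℝ) :
    Tendsto (fun ω => ∑ s, |v s - ω| ^ q) (cocompact ℝ) atTop := by
  obtain ⟨s₀⟩ := ‹Nonempty S›
  have h : Tendsto (fun ω => |v s₀ - ω|) (cocompact ℝ) atTop :=
    tendsto_atTop_mono (fun ω => by rw [abs_sub_comm]; exact abs_sub_abs_le_abs_sub ω (v s₀))
      (tendsto_atTop_add_const_right _ (-|v s₀|) tendsto_norm_cocompact_atTop)
  exact tendsto_atTop_mono
    (fun ω => single_le_sum (fun s _ => rpow_nonneg (abs_nonneg (v s - ω)) q) (mem_univ s₀))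
    ((tendsto_rpow_atTop hq).comp h)

lemma exists_min_sum_abs_sub_rpow [Nonempty S] {q : ℝ} (hq : 1 < q) (v : S → ℝ) :
    ∃ ω₀, (∀ ω, ∑ s, |v s - ω₀| ^ q ≤ ∑ s, |v s - ω| ^ q) ∧
      ∑ s, |v s - ω₀| ^ (q - 2) * (v s - ω₀) = 0 := by
  have hderiv : ∀ ω, HasDerivAt (fun ω => ∑ s, |v s - ω| ^ q)
      (∑ s, q * |v s - ω| ^ (q - 2) * (v s - ω) * (-1)) ω := fun ω =>
    HasDerivAt.fun_sum fun s _ =>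
      (hasDerivAt_abs_rpow (v s - ω) hq).comp ω ((hasDerivAt_id ω).const_sub (v s))
  obtain ⟨ω₀, hmin⟩ := Continuous.exists_forall_le
    (continuous_iff_continuousAt.2 fun ω => (hderiv ω).continuousAt)
    (tendsto_sum_abs_sub_rpow_cocompact (by linarith) v)
  refine ⟨ω₀, hmin, ?_⟩
  have h0 := IsLocalMin.hasDerivAt_eq_zero (Eventually.of_forall hmin) (hderiv ω₀)
  simp only [mul_neg_one, sum_neg_distrib, mul_assoc, ← mul_sum, neg_eq_zero] at h0
  exact (mul_eq_zero.1 h0).resolve_left (by linarith)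

end

/-- For a finite nonempty set `S`, `p ∈ (1,∞)` with Hölder conjugate
`q = p/(p-1)`, `v : S → ℝ` and `ε > 0`, the minimum of `⟨c, v⟩` over all `c` with
`‖c‖_p ≤ ε` and `∑ s, c s = 0` equals `-ε * κ_q(v)`, where
`κ_q(v) = ⨅ ω, ‖v - ω·𝟙‖_q`. -/
theorem stmt0 (S : Type*) [Fintype S] [Nonempty S]
    (p q : ℝ) (hp : 1 < p) (hq : q = p / (p - 1))
    (v : S → ℝ) (ε : ℝ) (hε : 0 < ε) :
    IsLeast {x : ℝ | ∃ c : S → ℝ,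
        (∑ s, |c s| ^ p) ^ (1 / p) ≤ ε ∧ (∑ s, c s) = 0 ∧
        x = ∑ s, c s * v s}
      (-ε * ⨅ ω : ℝ, (∑ s, |v s - ω| ^ q) ^ (1 / q)) := by
  have hpq : p.HolderConjugate q := (holderConjugate_iff_eq_conjExponent hp).2 hq
  obtain ⟨ω₀, hmin, hstat⟩ := exists_min_sum_abs_sub_rpow hpq.symm.lt v
  have hinf : ⨅ ω, (∑ s, |v s - ω| ^ q) ^ (1 / q) = (∑ s, |v s - ω₀| ^ q) ^ (1 / q) :=
    le_antisymm (ciInf_le ⟨0, by rintro _ ⟨ω, rfl⟩; positivity⟩ ω₀)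
      (le_ciInf fun ω => rpow_le_rpow (by positivity) (hmin ω) hpq.symm.one_div_nonneg)
  rw [hinf]
  constructor
  · obtain ⟨c, hcε, hc, hcv⟩ := exists_sum_eq_zero_sum_mul_eq_neg_mul_Lq_norm hpq hε.le hstat
    exact ⟨c, hcε, hc, by rw [← hcv, sum_mul_sub_const_of_sum_eq_zero hc]⟩
  · rintro _ ⟨c, hcε, hc, rfl⟩
    exact neg_mul_Lq_norm_le_sum_mul hpq hc hcε v ω₀
end

section
/- In the sa-rectangular setting, for every v ∈ ℝ^S, every state s ∈ S, and every policy π (i.e., π(·|s) ∈ Δ_A for each s): min over all reward noises r = (r_{s,a}) with |r_{s,a}| ≤ α_{s,a} and all kernel noises u = (u_{s,a}) with u_{s,a} : S → ℝ, ∑_{s'} u_{s,a}(s') = 0, ‖u_{s,a}‖_p ≤ β_{s,a}, of ∑_{a} π(a|s)[R₀(s,a) + r_{s,a} + γ ∑_{s'} (P₀(s'|s,a) + u_{s,a}(s')) v(s')], equals ∑_{a} π(a|s)[ −α_{s,a} − γ β_{s,a} κ_q(v) + R₀(s,a) + γ ∑_{s'} P₀(s'|s,a) v(s')]. Consequently,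 the maximum over π(·|s) ∈ Δ_A of this quantity equals max_{a∈A} [ −α_{s,a} − γ β_{s,a} κ_q(v) + R₀(s,a) + γ ∑_{s'} P₀(s'|s,a) v(s')]. -/
/-!
For a zero-sum perturbation `u`, `∑ u v = ∑ u (v - ω)` for every constant `ω`, so Hölder's
inequality bounds it below by `-‖u‖_p κ_q(v)`. The bound is attained: by the intermediate value
theorem some `ω` balances `∑ φ(v - ω) = 0` for `φ x = sign x * |x| ^ (q - 1)`, so the
Hölder-extremal direction `u ∝ -φ(v - ω)` is an admissible kernel perturbation, and equality in
Hölder forces `ω` to attain `κ_q(v)`. With `r = -α` this minimizes every action's term at once,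
since the noise is chosen independently for each `(s, a)`. The outer maximum of a linear function
over the simplex is attained at a vertex.
-/

open Finset Real

section Norms

variable {ι : Type*} [Fintype ι]

noncomputable def pNorm (p : ℝ) (u : ι → ℝ) : ℝ := (∑ i, |u i| ^ p) ^ (1 / p)

noncomputable def qVariance (q : ℝ) (v : ι → ℝ) : ℝ := ⨅ ω : ℝ, pNorm q (fun i => v i - ω)

lemma pNorm_nonneg (p : ℝ) (u : ι → ℝ) : 0 ≤ pNorm p u :=
  rpow_nonneg (sum_nonneg fun _ _ => rpow_nonneg (abs_nonneg _) _) _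

lemma pNorm_const_mul {p c : ℝ} (hp : p ≠ 0) (hc : 0 ≤ c) (u : ι → ℝ) :
    pNorm p (fun i => c * u i) = c * pNorm p u := by
  simp only [pNorm, abs_mul, abs_of_nonneg hc, mul_rpow hc (abs_nonneg _), ← mul_sum]
  rw [mul_rpow (rpow_nonneg hc _) (sum_nonneg fun _ _ => rpow_nonneg (abs_nonneg _) _),
    ← rpow_mul hc, mul_one_div_cancel hp, rpow_one]

lemma qVariance_nonneg (q : ℝ) (v : ι → ℝ) : 0 ≤ qVariance q v :=
  Real.iInf_nonneg fun _ => pNorm_nonneg _ _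

lemma qVariance_le_pNorm (q : ℝ) (v : ι → ℝ) (ω : ℝ) :
    qVariance q v ≤ pNorm q (fun i => v i - ω) :=
  ciInf_le ⟨0, by rintro _ ⟨ω, rfl⟩; exact pNorm_nonneg _ _⟩ ω

/-- Hölder's inequality, after shifting `v` by a constant, which `u` does not see. -/
lemma neg_pNorm_mul_qVariance_le_sum_mul {p q : ℝ} (hpq : p.HolderConjugate q) {u : ι → ℝ}
    (hu : ∑ i, u i = 0) (v : ι → ℝ) : -(pNorm p u * qVariance q v) ≤ ∑ i, u i * v i := by
  rw [neg_le, qVariance, mul_iInf_of_nonneg (pNorm_nonneg _ _)]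
  refine le_ciInf fun ω => ?_
  have hshift : ∑ i, u i * (ω - v i) = -∑ i, u i * v i := by
    simp only [mul_sub, sum_sub_distrib, ← sum_mul, hu, zero_mul, zero_sub]
  have holder := inner_le_Lp_mul_Lq univ u (fun i => ω - v i) hpq
  simp only [hshift, abs_sub_comm ω] at holder
  exact holder

end Norms

section SignedPow

noncomputable def signedPow (q x : ℝ) : ℝ := x⁺ ^ (q - 1) - x⁻ ^ (q - 1)

variable {q : ℝ}

lemma continuous_signedPow (hq : 1 < q) : Continuous (signedPow q) := by
  have hpow : Continuous fun y : ℝ => y ^ (q - 1) := continuous_rpow_const (by linarith)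
  exact (hpow.comp continuous_posPart).sub (hpow.comp continuous_negPart)

lemma signedPow_of_nonneg (hq : 1 < q) {x : ℝ} (hx : 0 ≤ x) : signedPow q x = x ^ (q - 1) := by
  rw [signedPow, posPart_eq_self.2 hx, negPart_eq_zero.2 hx, zero_rpow (by linarith), sub_zero]

lemma signedPow_of_nonpos (hq : 1 < q) {x : ℝ} (hx : x ≤ 0) :
    signedPow q x = -(-x) ^ (q - 1) := by
  rw [signedPow, posPart_eq_zero.2 hx, negPart_eq_neg.2 hx, zero_rpow (by linarith), zero_sub]

lemma abs_signedPow (hq : 1 < q) (x : ℝ) : |signedPow q x| = |x| ^ (q - 1) := by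
  rcases le_total 0 x with hx | hx
  · rw [signedPow_of_nonneg hq hx, abs_of_nonneg hx, abs_of_nonneg (rpow_nonneg hx _)]
  · rw [signedPow_of_nonpos hq hx, abs_of_nonpos hx, abs_neg,
      abs_of_nonneg (rpow_nonneg (neg_nonneg.2 hx) _)]

lemma signedPow_mul_self (hq : 1 < q) (x : ℝ) : signedPow q x * x = |x| ^ q := by
  have hpow : ∀ y : ℝ, 0 ≤ y → y ^ (q - 1) * y = y ^ q := fun y hy => by
    conv_rhs => rw [← sub_add_cancel q 1, rpow_add' hy (by linarith), rpow_one]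
  rcases le_total 0 x with hx | hx
  · rw [signedPow_of_nonneg hq hx, abs_of_nonneg hx, hpow x hx]
  · rw [signedPow_of_nonpos hq hx, abs_of_nonpos hx, ← hpow (-x) (neg_nonneg.2 hx)]
    ring

/-- The first-order condition for `ω ↦ ∑ i, |v i - ω| ^ q`, solved by the intermediate value
theorem between `min v` and `max v`. -/
lemma exists_sum_signedPow_sub_eq_zero (hq : 1 < q) {ι : Type*} [Fintype ι] (v : ι → ℝ) :
    ∃ ω, ∑ i, signedPow q (v i - ω) = 0 := by
  rcases isEmpty_or_nonempty ι with hι | hι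
  · exact ⟨0, by simp⟩
  set m := univ.inf' univ_nonempty v
  set M := univ.sup' univ_nonempty v
  obtain ⟨i₀⟩ := hι
  have hmM : m ≤ M := (inf'_le v (mem_univ i₀)).trans (le_sup' v (mem_univ i₀))
  have hcont : Continuous fun ω => ∑ i, signedPow q (v i - ω) :=
    continuous_finsetSum _ fun i _ => (continuous_signedPow hq).comp (continuous_sub_left (v i))
  have hM : ∑ i, signedPow q (v i - M) ≤ 0 := sum_nonpos fun i _ => by
    rw [signedPow_of_nonpos hq (sub_nonpos.2 (le_sup' v (mem_univ i)))]
    exact neg_nonpos.2 (rpow_nonneg (by simpa using le_sup' v (mem_univ i)) _)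
  have hm : 0 ≤ ∑ i, signedPow q (v i - m) := sum_nonneg fun i _ => by
    rw [signedPow_of_nonneg hq (sub_nonneg.2 (inf'_le v (mem_univ i)))]
    exact rpow_nonneg (sub_nonneg.2 (inf'_le v (mem_univ i))) _
  obtain ⟨ω, -, hω⟩ := intermediate_value_Icc' hmM hcont.continuousOn ⟨hM, hm⟩
  exact ⟨ω, hω⟩

end SignedPow

section Duality

variable {ι : Type*} [Fintype ι] {p q : ℝ}

lemma exists_pNorm_le_one_sum_mul_eq_neg_pNorm (hpq : p.HolderConjugate q) {v : ι → ℝ} {ω : ℝ}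
    (hω : ∑ i, signedPow q (v i - ω) = 0) :
    ∃ u : ι → ℝ, ∑ i, u i = 0 ∧ pNorm p u ≤ 1 ∧
      ∑ i, u i * v i = -pNorm q (fun i => v i - ω) := by
  have hq1 : 1 < q := hpq.symm.lt
  set c := ∑ i, |v i - ω| ^ q with hc
  have hc0 : 0 ≤ c := sum_nonneg fun _ _ => rpow_nonneg (abs_nonneg _) _
  have hnorm : pNorm q (fun i => v i - ω) = c ^ (1 / q) := rfl
  rcases hc0.eq_or_lt with hc0 | hcpos
  · refine ⟨0, by simp, ?_, ?_⟩
    · simp [pNorm, zero_rpow hpq.ne_zero, zero_rpow (inv_ne_zero hpq.ne_zero)]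
    · simp [hnorm, ← hc0, zero_rpow (inv_ne_zero hpq.symm.ne_zero)]
  set D := c ^ (1 / p)
  have hD : 0 < D := rpow_pos_of_pos hcpos _
  have hsum : ∑ i, -signedPow q (v i - ω) / D = 0 := by
    rw [← sum_div, sum_neg_distrib, hω, neg_zero, zero_div]
  refine ⟨fun i => -signedPow q (v i - ω) / D, hsum, ?_, ?_⟩
  · have habs : ∀ i, |-signedPow q (v i - ω) / D| ^ p = |v i - ω| ^ q / c := fun i => by
      rw [abs_div, abs_neg, abs_signedPow hq1, abs_of_pos hD,
        div_rpow (rpow_nonneg (abs_nonneg _) _) hD.le, ← rpow_mul (abs_nonneg _),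
        hpq.symm.sub_one_mul_conj, ← rpow_mul hc0, one_div_mul_cancel hpq.ne_zero, rpow_one]
    simp only [pNorm, habs, ← sum_div, ← hc, div_self hcpos.ne', one_rpow, le_refl]
  · have hterm : ∀ i, -signedPow q (v i - ω) / D * v i
        = -(|v i - ω| ^ q) / D + ω * (-signedPow q (v i - ω) / D) := fun i => by
      rw [← signedPow_mul_self hq1]
      ring
    have hcD : c / D = c ^ (1 / q) := by
      rw [one_div q, ← hpq.one_sub_inv, rpow_sub hcpos, rpow_one, inv_eq_one_div]
    rw [sum_congr rfl fun i _ => hterm i, sum_add_distrib, ← mul_sum, hsum, mul_zero, add_zero,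
      ← sum_div, sum_neg_distrib, ← hc, hnorm, neg_div, hcD]

lemma exists_sum_mul_eq_neg_qVariance (hpq : p.HolderConjugate q) (v : ι → ℝ) :
    ∃ u : ι → ℝ, ∑ i, u i = 0 ∧ pNorm p u ≤ 1 ∧ ∑ i, u i * v i = -qVariance q v := by
  obtain ⟨ω, hω⟩ := exists_sum_signedPow_sub_eq_zero hpq.symm.lt v
  obtain ⟨u, hu, hnorm, huv⟩ := exists_pNorm_le_one_sum_mul_eq_neg_pNorm hpq hω
  have hholder := neg_pNorm_mul_qVariance_le_sum_mul hpq hu v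
  have hκ := qVariance_nonneg q v
  have hκ_le := qVariance_le_pNorm q v ω
  refine ⟨u, hu, hnorm, ?_⟩
  nlinarith [mul_le_mul_of_nonneg_right hnorm hκ]

end Duality

lemma isGreatest_sum_mul_of_simplex {A : Type*} [Fintype A] [Nonempty A] (f : A → ℝ) :
    IsGreatest {y | ∃ w : A → ℝ, (∀ a, 0 ≤ w a) ∧ ∑ a, w a = 1 ∧ y = ∑ a, w a * f a}
      (univ.sup' univ_nonempty f) := by
  classical
  obtain ⟨a₀, -, ha₀⟩ := exists_mem_eq_sup' univ_nonempty f
  refine ⟨⟨Pi.single a₀ 1, fun a => ?_, by simp, by simp [ha₀, Pi.single_apply, ite_mul]⟩, ?_⟩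
  · by_cases h : a = a₀ <;> simp [h]
  · rintro y ⟨w, hw, hsum, rfl⟩
    calc ∑ a, w a * f a ≤ ∑ a, w a * univ.sup' univ_nonempty f :=
          sum_le_sum fun a _ => mul_le_mul_of_nonneg_left (le_sup' f (mem_univ a)) (hw a)
      _ = univ.sup' univ_nonempty f := by rw [← sum_mul, hsum, one_mul]

lemma regularized_le_robust {S : Type*} [Fintype S] {p q : ℝ} (hpq : p.HolderConjugate q)
    {γ α β r R : ℝ} (hγ : 0 ≤ γ) (hr : |r| ≤ α) {P u : S → ℝ} (hu : ∑ s', u s' = 0)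
    (hnorm : pNorm p u ≤ β) (v : S → ℝ) :
    -α - γ * β * qVariance q v + R + γ * ∑ s', P s' * v s'
      ≤ R + r + γ * ∑ s', (P s' + u s') * v s' := by
  have hholder := neg_pNorm_mul_qVariance_le_sum_mul hpq hu v
  have hκ := mul_le_mul_of_nonneg_right hnorm (qVariance_nonneg q v)
  simp only [add_mul, sum_add_distrib]
  nlinarith [neg_abs_le r, mul_le_mul_of_nonneg_left (hholder.trans' (neg_le_neg hκ)) hγ]

theorem stmt4_general (S A : Type*) [Fintype S] [Fintype A] [Nonempty A]
    (P₀ : S → A → S → ℝ)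
    (R₀ : S → A → ℝ) (γ : ℝ) (hγ0 : 0 ≤ γ)
    (p q : ℝ) (hp : 1 < p) (hq : q = p / (p - 1))
    (α β : S → A → ℝ) (hα : ∀ s a, 0 ≤ α s a) (hβ : ∀ s a, 0 ≤ β s a)
    (v : S → ℝ) (s : S)
    (pol : S → A → ℝ) (hpolpos : ∀ s a, 0 ≤ pol s a) :
    IsLeast {x : ℝ | ∃ (r : S → A → ℝ) (u : S → A → S → ℝ),
        (∀ s a, |r s a| ≤ α s a) ∧
        (∀ s a, ∑ s', u s a s' = 0) ∧
        (∀ s a, (∑ s', |u s a s'| ^ p) ^ (1 / p) ≤ β s a) ∧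
        x = ∑ a, pol s a * (R₀ s a + r s a +
              γ * ∑ s', (P₀ s a s' + u s a s') * v s')}
      (∑ a, pol s a * (-(α s a)
          - γ * β s a * (⨅ ω : ℝ, (∑ s', |v s' - ω| ^ q) ^ (1 / q))
          + R₀ s a + γ * ∑ s', P₀ s a s' * v s')) ∧
    IsGreatest {y : ℝ | ∃ pol' : A → ℝ, (∀ a, 0 ≤ pol' a) ∧ (∑ a, pol' a = 1) ∧
        y = ∑ a, pol' a * (-(α s a)
              - γ * β s a * (⨅ ω : ℝ, (∑ s', |v s' - ω| ^ q) ^ (1 / q))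
              + R₀ s a + γ * ∑ s', P₀ s a s' * v s')}
      (Finset.univ.sup' Finset.univ_nonempty (fun a =>
        -(α s a) - γ * β s a * (⨅ ω : ℝ, (∑ s', |v s' - ω| ^ q) ^ (1 / q))
          + R₀ s a + γ * ∑ s', P₀ s a s' * v s')) := by
  have hpq : p.HolderConjugate q := (holderConjugate_iff_eq_conjExponent hp).2 hq
  refine ⟨⟨?_, ?_⟩, isGreatest_sum_mul_of_simplex _⟩
  · obtain ⟨u, hu, hnorm, huv⟩ := exists_sum_mul_eq_neg_qVariance hpq v
    refine ⟨fun s a => -α s a, fun s a s' => β s a * u s',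
      fun s a => by rw [abs_neg, abs_of_nonneg (hα s a)],
      fun s a => by rw [← mul_sum, hu, mul_zero], fun s a => ?_, ?_⟩
    · calc pNorm p (fun s' => β s a * u s') = β s a * pNorm p u :=
          pNorm_const_mul hpq.ne_zero (hβ s a) u
        _ ≤ β s a := mul_le_of_le_one_right (hβ s a) hnorm
    · refine sum_congr rfl fun a _ => ?_
      have hshift : ∑ s', β s a * u s' * v s' = -(β s a * qVariance q v) := by
        simp only [mul_assoc, ← mul_sum, huv, mul_neg]
      simp only [add_mul, sum_add_distrib, hshift, qVariance, pNorm]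
      ring
  · rintro x ⟨r, u, hr, hu, hnorm, rfl⟩
    exact sum_le_sum fun a _ => mul_le_mul_of_nonneg_left
      (regularized_le_robust hpq hγ0 (hr s a) (hu s a) (hnorm s a) v) (hpolpos s a)

/-- sa-rectangular `L_p` robust Bellman operator equals the
reward-value regularized non-robust Bellman operator, and the optimal robust
Bellman operator is the max over actions of the regularized Q-values.
`κ_q(v) = ⨅ ω, ‖v - ω·𝟙‖_q`. -/
theorem stmt4 (S A : Type*) [Fintype S] [Fintype A] [Nonempty S] [Nonempty A]
    (P₀ : S → A → S → ℝ) (hP₀pos : ∀ s a s', 0 ≤ P₀ s a s')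
    (hP₀sum : ∀ s a, ∑ s', P₀ s a s' = 1)
    (R₀ : S → A → ℝ) (γ : ℝ) (hγ0 : 0 ≤ γ) (hγ1 : γ < 1)
    (p q : ℝ) (hp : 1 < p) (hq : q = p / (p - 1))
    (α β : S → A → ℝ) (hα : ∀ s a, 0 ≤ α s a) (hβ : ∀ s a, 0 ≤ β s a)
    (v : S → ℝ) (s : S)
    (pol : S → A → ℝ) (hpolpos : ∀ s a, 0 ≤ pol s a)
    (hpolsum : ∀ s, ∑ a, pol s a = 1) :
    IsLeast {x : ℝ | ∃ (r : S → A → ℝ) (u : S → A → S → ℝ),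
        (∀ s a, |r s a| ≤ α s a) ∧
        (∀ s a, ∑ s', u s a s' = 0) ∧
        (∀ s a, (∑ s', |u s a s'| ^ p) ^ (1 / p) ≤ β s a) ∧
        x = ∑ a, pol s a * (R₀ s a + r s a +
              γ * ∑ s', (P₀ s a s' + u s a s') * v s')}
      (∑ a, pol s a * (-(α s a)
          - γ * β s a * (⨅ ω : ℝ, (∑ s', |v s' - ω| ^ q) ^ (1 / q))
          + R₀ s a + γ * ∑ s', P₀ s a s' * v s')) ∧
    IsGreatest {y : ℝ | ∃ pol' : A → ℝ, (∀ a, 0 ≤ pol' a) ∧ (∑ a, pol' a = 1) ∧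
        y = ∑ a, pol' a * (-(α s a)
              - γ * β s a * (⨅ ω : ℝ, (∑ s', |v s' - ω| ^ q) ^ (1 / q))
              + R₀ s a + γ * ∑ s', P₀ s a s' * v s')}
      (Finset.univ.sup' Finset.univ_nonempty (fun a =>
        -(α s a) - γ * β s a * (⨅ ω : ℝ, (∑ s', |v s' - ω| ^ q) ^ (1 / q))
          + R₀ s a + γ * ∑ s', P₀ s a s' * v s')) :=
  stmt4_general S A P₀ R₀ γ hγ0 p q hp hq α β hα hβ v s pol hpolpos
end

section
/- Fix v ∈ ℝ^S and s ∈ S; set Q(s,a) := R₀(s,a) + γ ∑_{s'} P₀(s'|s,a) v(s') and σ := α_s + γ β_s κ_q(v), and assume σ > 0. Then the value max_{π_s ∈ Δ_A} ( −σ ‖π_s‖_q + ∑_{a} π_s(a) Q(s,a) ) is equal to the unique real number x satisfying ∑_{a∈A} (Q(s,a) − x)^p · 𝟙[Q(s,a) ≥ x] = σ^p. -/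
/-!
Write `g_x(a) = max (Q a - x) 0`. The function `F x = ∑ₐ g_x(a)^p` is continuous, vanishes at
`max Q` and is strictly decreasing wherever it is positive, so `F x = σ^p` has exactly one root `x`.
For `c` in the simplex, `∑ c Q - x = ∑ c (Q - x) ≤ ⟪c, g_x⟫ ≤ ‖c‖_q ‖g_x‖_p = σ ‖c‖_q` by Hölder,
so the objective is at most `x`; equality in Hölder holds for `c ∝ g_x^(p-1)`, which attains `x`.
-/

open Finset Real

namespace RegularizedGreedy

variable {A : Type*} [Fintype A] (Q : A → ℝ)

noncomputable def excessPowSum (p x : ℝ) : ℝ := ∑ a, max (Q a - x) 0 ^ p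

noncomputable def objective (σ q : ℝ) (c : A → ℝ) : ℝ :=
  -σ * (∑ a, |c a| ^ q) ^ (1 / q) + ∑ a, c a * Q a

variable {Q}

lemma max_sub_zero_rpow_eq_ite {p : ℝ} (hp : p ≠ 0) (t x : ℝ) :
    max (t - x) 0 ^ p = if x ≤ t then (t - x) ^ p else 0 := by
  split_ifs with h
  · rw [max_eq_left (sub_nonneg.2 h)]
  · rw [max_eq_right (sub_nonpos.2 (not_le.1 h).le), zero_rpow hp]

lemma continuous_excessPowSum {p : ℝ} (hp : 0 ≤ p) : Continuous (excessPowSum Q p) :=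
  continuous_finsetSum _ fun _ _ =>
    ((continuous_const.sub continuous_id).max continuous_const).rpow_const fun _ => Or.inr hp

lemma excessPowSum_lt_of_lt {p x y : ℝ} (hp : 0 < p) (hyx : y < x)
    (hpos : 0 < excessPowSum Q p x) : excessPowSum Q p x < excessPowSum Q p y := by
  obtain ⟨a, -, ha⟩ := exists_ne_zero_of_sum_ne_zero hpos.ne'
  have hxa : 0 < Q a - x := by
    by_contra! h
    exact ha (by rw [max_eq_right h, zero_rpow hp.ne'])
  refine sum_lt_sum (fun b _ => ?_) ⟨a, mem_univ a, ?_⟩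
  · exact rpow_le_rpow (le_max_right _ _) (max_le_max (by linarith) le_rfl) hp.le
  · rw [max_eq_left hxa.le, max_eq_left (by linarith)]
    exact rpow_lt_rpow hxa.le (by linarith) hp

lemma eq_of_excessPowSum_eq {p x y r : ℝ} (hp : 0 < p) (hr : 0 < r)
    (hx : excessPowSum Q p x = r) (hy : excessPowSum Q p y = r) : y = x := by
  rcases lt_trichotomy y x with h | h | h
  · exact absurd (hx.trans hy.symm) (excessPowSum_lt_of_lt hp h (hx ▸ hr)).ne
  · exact h
  · exact absurd (hy.trans hx.symm) (excessPowSum_lt_of_lt hp h (hy ▸ hr)).ne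

lemma exists_excessPowSum_eq [Nonempty A] {p σ : ℝ} (hp : 0 < p) (hσ : 0 ≤ σ) :
    ∃ x, excessPowSum Q p x = σ ^ p := by
  obtain ⟨amax, -, hmax⟩ := exists_max_image univ Q univ_nonempty
  have hzero : excessPowSum Q p (Q amax) = 0 :=
    sum_eq_zero fun a _ => by
      rw [max_eq_right (sub_nonpos.2 (hmax a (mem_univ a))), zero_rpow hp.ne']
  have hbig : σ ^ p ≤ excessPowSum Q p (Q amax - σ) := by
    have hterm : max (Q amax - (Q amax - σ)) 0 ^ p = σ ^ p := by
      rw [sub_sub_cancel, max_eq_left hσ]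
    exact hterm ▸ single_le_sum (f := fun a => max (Q a - (Q amax - σ)) 0 ^ p)
      (fun a _ => rpow_nonneg (le_max_right _ _) p) (mem_univ amax)
  obtain ⟨x, -, hx⟩ := intermediate_value_Icc' (by linarith : Q amax - σ ≤ Q amax)
    (continuous_excessPowSum hp.le).continuousOn
    ⟨hzero ▸ rpow_nonneg hσ p, hbig⟩
  exact ⟨x, hx⟩

lemma sum_mul_eq_sum_mul_sub_add {c : A → ℝ} (hc : ∑ a, c a = 1) (x : ℝ) :
    ∑ a, c a * Q a = ∑ a, c a * (Q a - x) + x := by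
  simp only [mul_sub, sum_sub_distrib, ← sum_mul, hc, one_mul, sub_add_cancel]

lemma objective_le_of_excessPowSum_eq {p q σ x : ℝ} (hpq : p.HolderConjugate q) (hσ : 0 ≤ σ)
    (hx : excessPowSum Q p x = σ ^ p) {c : A → ℝ} (hc0 : ∀ a, 0 ≤ c a) (hc1 : ∑ a, c a = 1) :
    objective Q σ q c ≤ x := by
  have hnorm : (∑ a, |max (Q a - x) 0| ^ p) ^ (1 / p) = σ := by
    rw [sum_congr rfl fun a _ => by rw [abs_of_nonneg (le_max_right (Q a - x) 0)],
      ← excessPowSum, hx, ← rpow_mul hσ, mul_one_div_cancel hpq.pos.ne', rpow_one]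
  have holder := inner_le_Lp_mul_Lq univ c (fun a => max (Q a - x) 0) hpq.symm
  rw [hnorm] at holder
  have hpos : ∑ a, c a * (Q a - x) ≤ ∑ a, c a * max (Q a - x) 0 :=
    sum_le_sum fun a _ => mul_le_mul_of_nonneg_left (le_max_left _ _) (hc0 a)
  rw [objective, sum_mul_eq_sum_mul_sub_add hc1 x]
  linarith

lemma exists_objective_eq_of_excessPowSum_eq {p q σ x : ℝ} (hpq : p.HolderConjugate q)
    (hσ : 0 < σ) (hx : excessPowSum Q p x = σ ^ p) :
    ∃ c : A → ℝ, (∀ a, 0 ≤ c a) ∧ ∑ a, c a = 1 ∧ objective Q σ q c = x := by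
  have hp := hpq.pos
  set g : A → ℝ := fun a => max (Q a - x) 0
  have hg : ∀ a, 0 ≤ g a := fun a => le_max_right _ _
  set N := ∑ a, g a ^ (p - 1)
  have hN : 0 < N := by
    obtain ⟨a, -, ha⟩ := exists_ne_zero_of_sum_ne_zero (hx.trans_ne (rpow_pos_of_pos hσ p).ne')
    have hga : 0 < g a := (hg a).lt_of_ne fun h =>
      ha (by rw [show max (Q a - x) 0 = 0 from h.symm, zero_rpow hp.ne'])
    exact sum_pos' (fun b _ => rpow_nonneg (hg b) _) ⟨a, mem_univ a, rpow_pos_of_pos hga _⟩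
  have hgp : ∀ a, g a ^ (p - 1) * (Q a - x) = g a ^ p := by
    intro a
    rcases le_or_gt (Q a - x) 0 with h | h
    · simp only [g, max_eq_right h, zero_rpow hp.ne', zero_rpow (sub_pos.2 hpq.lt).ne', zero_mul]
    · simp only [g, max_eq_left h.le]
      rw [← rpow_add_one h.ne', sub_add_cancel]
  refine ⟨fun a => g a ^ (p - 1) / N, fun a => div_nonneg (rpow_nonneg (hg a) _) hN.le,
    by rw [← sum_div, div_self hN.ne'], ?_⟩
  have hnorm : (∑ a, |g a ^ (p - 1) / N| ^ q) ^ (1 / q) = σ ^ (p - 1) / N := by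
    have hterm : ∀ a, |g a ^ (p - 1) / N| ^ q = g a ^ p / N ^ q := fun a => by
      rw [abs_of_nonneg (div_nonneg (rpow_nonneg (hg a) _) hN.le),
        div_rpow (rpow_nonneg (hg a) _) hN.le, ← rpow_mul (hg a), hpq.sub_one_mul_conj]
    rw [sum_congr rfl fun a _ => hterm a, ← sum_div, ← excessPowSum, hx,
      div_rpow (rpow_nonneg hσ.le _) (rpow_nonneg hN.le _), ← rpow_mul hσ.le, ← rpow_mul hN.le,
      mul_one_div, hpq.div_conj_eq_sub_one, mul_one_div_cancel hpq.symm.pos.ne', rpow_one]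
  have hinner : ∑ a, g a ^ (p - 1) / N * (Q a - x) = σ ^ p / N := by
    simp only [div_mul_eq_mul_div, ← sum_div, hgp]
    rw [← excessPowSum, hx]
  have hσσ : σ * σ ^ (p - 1) = σ ^ p := by
    rw [mul_comm, ← rpow_add_one hσ.ne', sub_add_cancel]
  rw [objective, sum_mul_eq_sum_mul_sub_add (by rw [← sum_div, div_self hN.ne']) x, hnorm, hinner,
    ← hσσ]
  ring

end RegularizedGreedy

open RegularizedGreedy

theorem stmt6_general (S A : Type*) [Fintype A] [Nonempty A]
    (p q : ℝ) (hp : 1 < p) (hq : q = p / (p - 1))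
    (s : S)
    (Q : S → A → ℝ)
    (σ : ℝ)
    (hσpos : 0 < σ) :
    ∃ x : ℝ,
      (∑ a, if x ≤ Q s a then (Q s a - x) ^ p else 0) = σ ^ p ∧
      (∀ y : ℝ, (∑ a, if y ≤ Q s a then (Q s a - y) ^ p else 0) = σ ^ p → y = x) ∧
      IsGreatest {z : ℝ | ∃ c : A → ℝ, (∀ a, 0 ≤ c a) ∧ (∑ a, c a = 1) ∧
          z = -σ * (∑ a, |c a| ^ q) ^ (1 / q) + ∑ a, c a * Q s a} x := by
  have hpq : p.HolderConjugate q := (holderConjugate_iff_eq_conjExponent hp).2 hq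
  have hite : ∀ x, (∑ a, if x ≤ Q s a then (Q s a - x) ^ p else 0) = excessPowSum (Q s) p x :=
    fun x => sum_congr rfl fun a _ => (max_sub_zero_rpow_eq_ite hpq.pos.ne' _ x).symm
  obtain ⟨x, hx⟩ := exists_excessPowSum_eq (Q := Q s) hpq.pos hσpos.le
  obtain ⟨c, hc0, hc1, hcx⟩ := exists_objective_eq_of_excessPowSum_eq (q := q) hpq hσpos hx
  refine ⟨x, (hite x).trans hx, fun y hy => ?_, ⟨c, hc0, hc1, hcx.symm⟩, ?_⟩
  · exact eq_of_excessPowSum_eq hpq.pos (rpow_pos_of_pos hσpos p) hx ((hite y).symm.trans hy)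
  · rintro z ⟨d, hd0, hd1, rfl⟩
    exact objective_le_of_excessPowSum_eq hpq hσpos.le hx hd0 hd1

/-- With `Q(s,a) = R₀(s,a) + γ ∑_{s'} P₀(s'|s,a) v(s')` and
`σ = α_s + γ β_s κ_q(v) > 0`, the value `max_{π_s ∈ Δ_A} (-σ ‖π_s‖_q + ⟨π_s, Q(s,·)⟩)`
equals the unique real `x` with `∑_a (Q(s,a) - x)^p 𝟙[Q(s,a) ≥ x] = σ^p`. -/
theorem stmt6 (S A : Type*) [Fintype S] [Fintype A] [Nonempty S] [Nonempty A]
    (P₀ : S → A → S → ℝ) (hP₀pos : ∀ s a s', 0 ≤ P₀ s a s')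
    (hP₀sum : ∀ s a, ∑ s', P₀ s a s' = 1)
    (R₀ : S → A → ℝ) (γ : ℝ) (hγ0 : 0 ≤ γ) (hγ1 : γ < 1)
    (p q : ℝ) (hp : 1 < p) (hq : q = p / (p - 1))
    (α β : S → ℝ) (hα : ∀ s, 0 ≤ α s) (hβ : ∀ s, 0 ≤ β s)
    (v : S → ℝ) (s : S)
    (Q : S → A → ℝ) (hQ : ∀ s a, Q s a = R₀ s a + γ * ∑ s', P₀ s a s' * v s')
    (σ : ℝ) (hσdef : σ = α s + γ * β s * (⨅ ω : ℝ, (∑ s', |v s' - ω| ^ q) ^ (1 / q)))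
    (hσpos : 0 < σ) :
    ∃ x : ℝ,
      (∑ a, if x ≤ Q s a then (Q s a - x) ^ p else 0) = σ ^ p ∧
      (∀ y : ℝ, (∑ a, if y ≤ Q s a then (Q s a - y) ^ p else 0) = σ ^ p → y = x) ∧
      IsGreatest {z : ℝ | ∃ c : A → ℝ, (∀ a, 0 ≤ c a) ∧ (∑ a, c a = 1) ∧
          z = -σ * (∑ a, |c a| ^ q) ^ (1 / q) + ∑ a, c a * Q s a} x :=
  stmt6_general S A p q hp hq s Q σ hσpos
end

section
/- Suppose v* ∈ ℝ^S satisfies, for every s ∈ S, v*(s) = max_{π_s ∈ Δ_A} ( −σ_s ‖π_s‖_q + ∑_{a} π_s(a) Q(s,a) ), where Q(s,a) := R₀(s,a) + γ ∑_{s'} P₀(s'|s,a) v*(s') and σ_s := α_s + γ β_s κ_q(v*), and assume σ_s > 0 for all s. Then for each s ∈ S the normalizer Z_s := ∑_{a} (Q(s,a) − v*(s))^{p−1} 𝟙[Q(s,a) ≥ v*(s)] is strictly positive, and the policy π*(a|s) := (Q(s,a) − v*(s))^{p−1} 𝟙[Q(s,a) ≥ v*(s)] / Z_s attains the maximum: −σ_s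 ‖π*(·|s)‖_q + ∑_{a} π*(a|s) Q(s,a) = v*(s). -/
/-!
Write `u = (Q - v)⁺` and `‖·‖_r` for the `ℓ_r` norm. Since a distribution `c` has total mass one,
its value exceeds `v` by `⟨c, Q - v⟩ - σ‖c‖_q ≤ (‖u‖_p - σ)‖c‖_q` (Hölder); for a maximiser this
forces `σ ≤ ‖u‖_p`, so in particular `u ≠ 0`. The policy `c ∝ u ^ (p - 1)` is the equality case of
Hölder: its value is `v + ‖u‖_p ^ (p / q) (‖u‖_p - σ) / Z ≥ v`, and maximality of `v` gives
equality.
-/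

open Finset

section

variable {ι : Type*} [Fintype ι] {p q : ℝ}

lemma ite_le_rpow_eq_posPart_rpow (hp : p ≠ 1) (v x : ℝ) :
    (if v ≤ x then (x - v) ^ (p - 1) else 0) = (x - v)⁺ ^ (p - 1) := by
  rw [posPart_eq_ite]
  split_ifs with h₁ h₂ h₂
  · rfl
  · exact absurd (sub_nonneg.2 h₁) h₂
  · exact absurd (sub_nonneg.1 h₂) h₁
  · exact (Real.zero_rpow (sub_ne_zero.2 hp)).symm

lemma posPart_rpow_sub_one_mul_self (hp : 1 < p) (x : ℝ) : x⁺ ^ (p - 1) * x = x⁺ ^ p := by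
  rcases le_or_gt x 0 with hx | hx
  · rw [posPart_eq_zero.2 hx, Real.zero_rpow (by linarith), Real.zero_rpow (by linarith), zero_mul]
  · rw [posPart_eq_self.2 hx.le, Real.rpow_sub_one hx.ne', div_mul_cancel₀ _ hx.ne']

lemma sum_abs_div_rpow_rpow_one_div (hq : 0 < q) (c : ι → ℝ) {Z : ℝ} (hZ : 0 < Z) :
    (∑ i, |c i / Z| ^ q) ^ (1 / q) = (∑ i, |c i| ^ q) ^ (1 / q) / Z := by
  simp_rw [abs_div, abs_of_pos hZ, Real.div_rpow (abs_nonneg _) hZ.le, ← sum_div]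
  rw [Real.div_rpow (sum_nonneg fun i _ => by positivity) (by positivity),
    ← Real.rpow_mul hZ.le, mul_one_div_cancel hq.ne', Real.rpow_one]

lemma sum_abs_rpow_rpow_pos_of_sum_eq_one {c : ι → ℝ} (hc : ∑ i, c i = 1) :
    0 < (∑ i, |c i| ^ q) ^ (1 / q) := by
  obtain ⟨i, -, hi⟩ := exists_ne_zero_of_sum_ne_zero (hc ▸ one_ne_zero)
  have : 0 < ∑ i, |c i| ^ q :=
    sum_pos' (fun j _ => by positivity) ⟨i, mem_univ i, by positivity⟩
  positivity

lemma sum_mul_le_posPart_rpow_mul (hpq : p.HolderConjugate q) {c : ι → ℝ}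
    (hc : ∀ i, 0 ≤ c i) (f : ι → ℝ) :
    ∑ i, c i * f i ≤ (∑ i, (f i)⁺ ^ p) ^ (1 / p) * (∑ i, |c i| ^ q) ^ (1 / q) :=
  calc ∑ i, c i * f i ≤ ∑ i, (f i)⁺ * c i :=
        sum_le_sum fun i _ => mul_comm (f i) (c i) ▸
          mul_le_mul_of_nonneg_right (le_posPart _) (hc i)
    _ ≤ _ := by
        simpa only [abs_of_nonneg (posPart_nonneg _)] using
          Real.inner_le_Lp_mul_Lq univ (fun i => (f i)⁺) c hpq

lemma sum_abs_posPart_rpow_sub_one_rpow (hpq : p.HolderConjugate q) (f : ι → ℝ) :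
    ∑ i, |(f i)⁺ ^ (p - 1)| ^ q = ∑ i, (f i)⁺ ^ p := by
  simp_rw [abs_of_nonneg (Real.rpow_nonneg (posPart_nonneg _) _),
    ← Real.rpow_mul (posPart_nonneg _), hpq.sub_one_mul_conj]

lemma sum_posPart_rpow_sub_one_pos (hp : 1 < p) {f : ι → ℝ} (hf : 0 < ∑ i, (f i)⁺ ^ p) :
    0 < ∑ i, (f i)⁺ ^ (p - 1) := by
  obtain ⟨i, -, hi⟩ := exists_lt_of_sum_lt (sum_const_zero.trans_lt hf)
  have : 0 < (f i)⁺ := (posPart_nonneg _).lt_of_ne fun h => by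
    rw [← h, Real.zero_rpow (by linarith)] at hi; exact hi.false
  exact sum_pos' (fun j _ => Real.rpow_nonneg (posPart_nonneg _) _)
    ⟨i, mem_univ i, Real.rpow_pos_of_pos this _⟩

lemma sum_mul_sub_const_of_sum_eq_one {c : ι → ℝ} (hc : ∑ i, c i = 1) (f : ι → ℝ) (v : ℝ) :
    ∑ i, c i * (f i - v) = ∑ i, c i * f i - v := by
  simp only [mul_sub, sum_sub_distrib, ← sum_mul, hc, one_mul]

variable {σ v : ℝ} {Q : ι → ℝ}

lemma le_sum_posPart_rpow_of_isGreatest (hpq : p.HolderConjugate q)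
    (hv : IsGreatest {z : ℝ | ∃ c : ι → ℝ, (∀ a, 0 ≤ c a) ∧ (∑ a, c a = 1) ∧
        z = -σ * (∑ a, |c a| ^ q) ^ (1 / q) + ∑ a, c a * Q a} v) :
    σ ≤ (∑ a, (Q a - v)⁺ ^ p) ^ (1 / p) := by
  obtain ⟨c, hc, hc1, hv⟩ := hv.1
  refine le_of_mul_le_mul_right ?_ (sum_abs_rpow_rpow_pos_of_sum_eq_one (q := q) hc1)
  calc σ * (∑ a, |c a| ^ q) ^ (1 / q) = ∑ a, c a * (Q a - v) := by
        rw [sum_mul_sub_const_of_sum_eq_one hc1]; linarith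
    _ ≤ _ := sum_mul_le_posPart_rpow_mul hpq hc _

lemma threshold_policy_value_eq (hpq : p.HolderConjugate q)
    (hZ : 0 < ∑ a, (Q a - v)⁺ ^ (p - 1)) :
    -σ * (∑ a, |(Q a - v)⁺ ^ (p - 1) / ∑ a', (Q a' - v)⁺ ^ (p - 1)| ^ q) ^ (1 / q)
        + ∑ a, ((Q a - v)⁺ ^ (p - 1) / ∑ a', (Q a' - v)⁺ ^ (p - 1)) * Q a
      = v + (∑ a, (Q a - v)⁺ ^ p) ^ (1 / q) * ((∑ a, (Q a - v)⁺ ^ p) ^ (1 / p) - σ) /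
          ∑ a, (Q a - v)⁺ ^ (p - 1) := by
  set Z := ∑ a, (Q a - v)⁺ ^ (p - 1)
  set Sp := ∑ a, (Q a - v)⁺ ^ p with hSpdef
  have hc1 : ∑ a, (Q a - v)⁺ ^ (p - 1) / Z = 1 := by rw [← sum_div, div_self hZ.ne']
  have hlin : ∑ a, ((Q a - v)⁺ ^ (p - 1) / Z) * Q a = v + Sp / Z := by
    rw [← sub_eq_iff_eq_add', ← sum_mul_sub_const_of_sum_eq_one hc1]
    simp only [div_mul_eq_mul_div, ← sum_div, posPart_rpow_sub_one_mul_self hpq.lt, Sp]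
  have hexp : 1 / q + 1 / p = 1 := by simpa only [one_div, add_comm] using hpq.inv_add_inv_eq_one
  have hSp : Sp ^ (1 / q) * Sp ^ (1 / p) = Sp := by
    rw [← Real.rpow_add' (sum_nonneg fun a _ => by positivity) (by rw [hexp]; exact one_ne_zero),
      hexp, Real.rpow_one]
  rw [sum_abs_div_rpow_rpow_one_div hpq.symm.pos _ hZ, sum_abs_posPart_rpow_sub_one_rpow hpq,
    ← hSpdef, hlin, mul_sub, hSp]
  ring

theorem threshold_policy_isGreatest (hpq : p.HolderConjugate q) (hσ : 0 < σ)
    (hv : IsGreatest {z : ℝ | ∃ c : ι → ℝ, (∀ a, 0 ≤ c a) ∧ (∑ a, c a = 1) ∧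
        z = -σ * (∑ a, |c a| ^ q) ^ (1 / q) + ∑ a, c a * Q a} v) :
    0 < ∑ a, (Q a - v)⁺ ^ (p - 1) ∧
    -σ * (∑ a, |(Q a - v)⁺ ^ (p - 1) / ∑ a', (Q a' - v)⁺ ^ (p - 1)| ^ q) ^ (1 / q)
        + ∑ a, ((Q a - v)⁺ ^ (p - 1) / ∑ a', (Q a' - v)⁺ ^ (p - 1)) * Q a = v := by
  have hσS := le_sum_posPart_rpow_of_isGreatest hpq hv
  have hSp : 0 < ∑ a, (Q a - v)⁺ ^ p := by
    refine (sum_nonneg fun a _ => by positivity).lt_of_ne fun h => ?_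
    rw [← h, Real.zero_rpow (one_div_ne_zero hpq.ne_zero)] at hσS
    linarith
  have hZ := sum_posPart_rpow_sub_one_pos hpq.lt hSp
  have hc1 : ∑ a, (Q a - v)⁺ ^ (p - 1) / ∑ a', (Q a' - v)⁺ ^ (p - 1) = 1 := by
    rw [← sum_div, div_self hZ.ne']
  refine ⟨hZ, le_antisymm (hv.2 ⟨_, fun a => by positivity, hc1, rfl⟩) ?_⟩
  rw [threshold_policy_value_eq hpq hZ, le_add_iff_nonneg_right]
  have := sub_nonneg.2 hσS
  positivity

end

theorem stmt7_general (S A : Type*) [Fintype A]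
    (p q : ℝ) (hp : 1 < p) (hq : q = p / (p - 1))
    (vstar : S → ℝ)
    (Q : S → A → ℝ)
    (σ : S → ℝ)
    (hσpos : ∀ s, 0 < σ s)
    (hfix : ∀ s, IsGreatest {z : ℝ | ∃ c : A → ℝ, (∀ a, 0 ≤ c a) ∧ (∑ a, c a = 1) ∧
        z = -(σ s) * (∑ a, |c a| ^ q) ^ (1 / q) + ∑ a, c a * Q s a} (vstar s)) :
    ∀ s : S,
      0 < (∑ a, if vstar s ≤ Q s a then (Q s a - vstar s) ^ (p - 1) else 0) ∧
      -(σ s) * (∑ a, |(if vstar s ≤ Q s a then (Q s a - vstar s) ^ (p - 1) else 0) /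
            (∑ a', if vstar s ≤ Q s a' then (Q s a' - vstar s) ^ (p - 1) else 0)| ^ q) ^ (1 / q)
        + ∑ a, ((if vstar s ≤ Q s a then (Q s a - vstar s) ^ (p - 1) else 0) /
            (∑ a', if vstar s ≤ Q s a' then (Q s a' - vstar s) ^ (p - 1) else 0)) * Q s a
        = vstar s := by
  intro s
  have hpq : p.HolderConjugate q := (Real.holderConjugate_iff_eq_conjExponent hp).2 hq
  simp only [ite_le_rpow_eq_posPart_rpow hp.ne']
  exact threshold_policy_isGreatest hpq (hσpos s) (hfix s)

/-- If `v*` is the optimal robust value function (fixed point of the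
s-rectangular optimal robust Bellman operator) with `σ_s > 0` for all `s`, then
for each `s` the normalizer `Z_s = ∑_a (Q(s,a) - v*(s))^{p-1} 𝟙[Q(s,a) ≥ v*(s)]`
is strictly positive, and the threshold policy
`π*(a|s) = (Q(s,a) - v*(s))^{p-1} 𝟙[Q(s,a) ≥ v*(s)] / Z_s` attains the maximum:
`-σ_s ‖π*(·|s)‖_q + ∑_a π*(a|s) Q(s,a) = v*(s)`. -/
theorem stmt7 (S A : Type*) [Fintype S] [Fintype A] [Nonempty S] [Nonempty A]
    (P₀ : S → A → S → ℝ) (hP₀pos : ∀ s a s', 0 ≤ P₀ s a s')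
    (hP₀sum : ∀ s a, ∑ s', P₀ s a s' = 1)
    (R₀ : S → A → ℝ) (γ : ℝ) (hγ0 : 0 ≤ γ) (hγ1 : γ < 1)
    (p q : ℝ) (hp : 1 < p) (hq : q = p / (p - 1))
    (α β : S → ℝ) (hα : ∀ s, 0 ≤ α s) (hβ : ∀ s, 0 ≤ β s)
    (vstar : S → ℝ)
    (Q : S → A → ℝ) (hQ : ∀ s a, Q s a = R₀ s a + γ * ∑ s', P₀ s a s' * vstar s')
    (σ : S → ℝ)
    (hσdef : ∀ s, σ s = α s + γ * β s * (⨅ ω : ℝ, (∑ s', |vstar s' - ω| ^ q) ^ (1 / q)))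
    (hσpos : ∀ s, 0 < σ s)
    (hfix : ∀ s, IsGreatest {z : ℝ | ∃ c : A → ℝ, (∀ a, 0 ≤ c a) ∧ (∑ a, c a = 1) ∧
        z = -(σ s) * (∑ a, |c a| ^ q) ^ (1 / q) + ∑ a, c a * Q s a} (vstar s)) :
    ∀ s : S,
      0 < (∑ a, if vstar s ≤ Q s a then (Q s a - vstar s) ^ (p - 1) else 0) ∧
      -(σ s) * (∑ a, |(if vstar s ≤ Q s a then (Q s a - vstar s) ^ (p - 1) else 0) /
            (∑ a', if vstar s ≤ Q s a' then (Q s a' - vstar s) ^ (p - 1) else 0)| ^ q) ^ (1 / q)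
        + ∑ a, ((if vstar s ≤ Q s a then (Q s a - vstar s) ^ (p - 1) else 0) /
            (∑ a', if vstar s ≤ Q s a' then (Q s a' - vstar s) ^ (p - 1) else 0)) * Q s a
        = vstar s :=
  stmt7_general S A p q hp hq vstar Q σ hσpos hfix
end

section
/- Let ζ_p := max_{c ∈ Δ_A} ( −α ‖c‖_q + ⟨c, b⟩ ). Then the normalizer Z := ∑_{i=1}^{A} (b_i − ζ_p)^{p−1} 𝟙[b_i ≥ ζ_p] is strictly positive, and the vector c* ∈ Δ_A defined by c*_i := (b_i − ζ_p)^{p−1} 𝟙[b_i ≥ ζ_p] / Z is a maximizer: −α ‖c*‖_q + ⟨c*, b⟩ = ζ_p. -/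
/-!
Write `x = (b - ζ)⁺`. At any maximizer `c`, Hölder gives
`α ‖c‖_q = ⟨c, b - ζ⟩ ≤ ⟨c, x⟩ ≤ ‖x‖_p ‖c‖_q`, hence `α ≤ ‖x‖_p`; and `ζ < ⟨c, b⟩` forces some
`b_i > ζ`, so `Z > 0`. The candidate `c* = x^(p-1) / Z` is the equality direction of Hölder for `x`,
and its objective value is `ζ + ‖x‖_p^(p/q) (‖x‖_p - α) / Z ≥ ζ`; maximality of `ζ` gives equality.
-/

open Finset Real

section

variable {ι : Type*} [Fintype ι]

noncomputable def lqObjective (α q : ℝ) (b c : ι → ℝ) : ℝ :=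
  -α * (∑ i, |c i| ^ q) ^ (1 / q) + ∑ i, c i * b i

lemma ite_le_rpow_eq_max_rpow {r : ℝ} (hr : 0 < r) (x y : ℝ) :
    (if x ≤ y then (y - x) ^ r else 0) = max (y - x) 0 ^ r := by
  split_ifs with h
  · rw [max_eq_left (sub_nonneg.2 h)]
  · rw [max_eq_right (by linarith), zero_rpow hr.ne']

lemma rpow_sub_one_mul_self {x p : ℝ} (hx : 0 ≤ x) (hp : p ≠ 0) : x ^ (p - 1) * x = x ^ p := by
  conv_rhs => rw [← sub_add_cancel p 1, rpow_add' hx (by simpa using hp), rpow_one]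

lemma rpow_sum_abs_rpow_pos {q : ℝ} {c : ι → ℝ} (hc : c ≠ 0) :
    0 < (∑ i, |c i| ^ q) ^ (1 / q) := by
  obtain ⟨i, hi⟩ := Function.ne_iff.1 hc
  exact rpow_pos_of_pos (sum_pos' (fun j _ => by positivity)
    ⟨i, mem_univ i, rpow_pos_of_pos (abs_pos.2 hi) q⟩) _

lemma rpow_sum_abs_div_rpow {q Z : ℝ} (hq : q ≠ 0) (hZ : 0 < Z) (d : ι → ℝ) :
    (∑ i, |d i / Z| ^ q) ^ (1 / q) = (∑ i, |d i| ^ q) ^ (1 / q) / Z := by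
  simp_rw [abs_div, abs_of_pos hZ, div_rpow (abs_nonneg _) hZ.le, ← sum_div]
  rw [div_rpow (by positivity) (by positivity), ← rpow_mul hZ.le, mul_one_div_cancel hq, rpow_one]

lemma ne_zero_of_mem_stdSimplex {c : ι → ℝ} (hc : c ∈ stdSimplex ℝ ι) : c ≠ 0 := by
  rintro rfl
  simpa using hc.2

lemma exists_lt_of_lt_sum_mul {ζ : ℝ} {b c : ι → ℝ} (hc : c ∈ stdSimplex ℝ ι)
    (h : ζ < ∑ i, c i * b i) : ∃ i, ζ < b i := by
  have : ∑ i, c i * ζ < ∑ i, c i * b i := by rwa [← sum_mul, hc.2, one_mul]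
  obtain ⟨i, -, hi⟩ := exists_lt_of_sum_lt this
  exact ⟨i, lt_of_mul_lt_mul_left hi (hc.1 i)⟩

lemma sum_mul_le_Lp_max_mul_Lq {p q : ℝ} (hpq : p.HolderConjugate q) {c y : ι → ℝ}
    (hc : ∀ i, 0 ≤ c i) :
    ∑ i, c i * y i ≤ (∑ i, max (y i) 0 ^ p) ^ (1 / p) * (∑ i, |c i| ^ q) ^ (1 / q) := by
  calc ∑ i, c i * y i ≤ ∑ i, max (y i) 0 * c i :=
        sum_le_sum fun i _ =>
          (mul_le_mul_of_nonneg_left (le_max_left _ _) (hc i)).trans_eq (mul_comm _ _)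
    _ ≤ _ := by
        simp_rw [abs_of_nonneg (hc _)]
        exact inner_le_Lp_mul_Lq_of_nonneg univ hpq (fun i _ => le_max_right _ _) fun i _ => hc i

lemma max_rpow_sub_one_mul {p : ℝ} (hp : 1 < p) (y : ℝ) : max y 0 ^ (p - 1) * y = max y 0 ^ p := by
  rcases le_total 0 y with hy | hy
  · rw [max_eq_left hy, rpow_sub_one_mul_self hy (by linarith)]
  · rw [max_eq_right hy, zero_rpow (by linarith), zero_rpow (by linarith), zero_mul]

lemma le_rpow_sum_max_sub_rpow {α p q ζ : ℝ} (hpq : p.HolderConjugate q) {b c : ι → ℝ}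
    (hc : c ∈ stdSimplex ℝ ι) (h : lqObjective α q b c = ζ) :
    α ≤ (∑ i, max (b i - ζ) 0 ^ p) ^ (1 / p) := by
  have hN := rpow_sum_abs_rpow_pos (q := q) (ne_zero_of_mem_stdSimplex hc)
  have hgain : ∑ i, c i * (b i - ζ) = α * (∑ i, |c i| ^ q) ^ (1 / q) := by
    simp only [mul_sub, sum_sub_distrib, ← sum_mul, hc.2, one_mul]
    unfold lqObjective at h
    linarith
  refine le_of_mul_le_mul_right ?_ hN
  rw [← hgain]
  exact sum_mul_le_Lp_max_mul_Lq hpq hc.1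

lemma lqObjective_max_sub_rpow_div_sum {α p q ζ : ℝ} (hpq : p.HolderConjugate q) {b : ι → ℝ}
    (hZ : 0 < ∑ i, max (b i - ζ) 0 ^ (p - 1)) :
    lqObjective α q b (fun i => max (b i - ζ) 0 ^ (p - 1) / ∑ j, max (b j - ζ) 0 ^ (p - 1)) =
      ζ + (∑ i, max (b i - ζ) 0 ^ p) ^ (1 / q) *
        ((∑ i, max (b i - ζ) 0 ^ p) ^ (1 / p) - α) / ∑ i, max (b i - ζ) 0 ^ (p - 1) := by
  set Z := ∑ i, max (b i - ζ) 0 ^ (p - 1)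
  set S := ∑ i, max (b i - ζ) 0 ^ p
  have hnorm : ∑ i, |max (b i - ζ) 0 ^ (p - 1)| ^ q = S := by
    refine sum_congr rfl fun i _ => ?_
    rw [abs_of_nonneg (by positivity), ← rpow_mul (le_max_right _ _), hpq.sub_one_mul_conj]
  have hinner : ∑ i, max (b i - ζ) 0 ^ (p - 1) / Z * b i = S / Z + ζ := by
    have hterm : ∀ i, max (b i - ζ) 0 ^ (p - 1) * b i =
        max (b i - ζ) 0 ^ p + max (b i - ζ) 0 ^ (p - 1) * ζ := fun i => by
      rw [← max_rpow_sub_one_mul hpq.lt]; ring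
    simp_rw [div_mul_eq_mul_div, ← sum_div, hterm]
    rw [sum_add_distrib, ← sum_mul, add_div, mul_div_cancel_left₀ _ hZ.ne']
  have hsplit : S = S ^ (1 / p) * S ^ (1 / q) := by
    rw [← rpow_add' (by positivity) (by rw [hpq.one_div_add_one_div]; norm_num),
      hpq.one_div_add_one_div, div_one, rpow_one]
  unfold lqObjective
  rw [rpow_sum_abs_div_rpow hpq.symm.ne_zero hZ, hnorm, hinner]
  rw [mul_sub, mul_comm (S ^ (1 / q)), ← hsplit]
  field_simp
  ring

lemma sum_max_sub_rpow_pos {α q ζ : ℝ} (hα : 0 < α) {b c : ι → ℝ}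
    (hc : c ∈ stdSimplex ℝ ι) (h : lqObjective α q b c = ζ) (r : ℝ) :
    0 < ∑ i, max (b i - ζ) 0 ^ r := by
  have hN := rpow_sum_abs_rpow_pos (q := q) (ne_zero_of_mem_stdSimplex hc)
  have : ζ < ∑ i, c i * b i := by
    unfold lqObjective at h
    nlinarith
  obtain ⟨i, hi⟩ := exists_lt_of_lt_sum_mul hc this
  exact sum_pos' (fun j _ => by positivity)
    ⟨i, mem_univ i, rpow_pos_of_pos (lt_max_of_lt_left (sub_pos.2 hi)) r⟩

end

theorem stmt10_general (A : ℕ) (b : Fin A → ℝ)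
    (α : ℝ) (hα : 0 < α) (p q : ℝ) (hp : 1 < p) (hq : q = p / (p - 1))
    (ζ : ℝ)
    (hζ : IsGreatest {y : ℝ | ∃ c : Fin A → ℝ, (∀ i, 0 ≤ c i) ∧ (∑ i, c i = 1) ∧
        y = -α * (∑ i, |c i| ^ q) ^ (1 / q) + ∑ i, c i * b i} ζ) :
    0 < (∑ i, if ζ ≤ b i then (b i - ζ) ^ (p - 1) else 0) ∧
    (∀ i : Fin A, 0 ≤ (if ζ ≤ b i then (b i - ζ) ^ (p - 1) else 0) /
        (∑ j, if ζ ≤ b j then (b j - ζ) ^ (p - 1) else 0)) ∧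
    (∑ i, (if ζ ≤ b i then (b i - ζ) ^ (p - 1) else 0) /
        (∑ j, if ζ ≤ b j then (b j - ζ) ^ (p - 1) else 0)) = 1 ∧
    -α * (∑ i, |(if ζ ≤ b i then (b i - ζ) ^ (p - 1) else 0) /
          (∑ j, if ζ ≤ b j then (b j - ζ) ^ (p - 1) else 0)| ^ q) ^ (1 / q)
      + ∑ i, ((if ζ ≤ b i then (b i - ζ) ^ (p - 1) else 0) /
          (∑ j, if ζ ≤ b j then (b j - ζ) ^ (p - 1) else 0)) * b i = ζ := by
  have hpq : p.HolderConjugate q := (holderConjugate_iff_eq_conjExponent hp).2 hq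
  obtain ⟨⟨c, hc0, hc1, hcζ⟩, hmax⟩ := hζ
  have hc : c ∈ stdSimplex ℝ (Fin A) := ⟨hc0, hc1⟩
  simp only [ite_le_rpow_eq_max_rpow hpq.sub_one_pos]
  have hZ := sum_max_sub_rpow_pos hα hc hcζ.symm (p - 1)
  have hstar : (fun i => max (b i - ζ) 0 ^ (p - 1) / ∑ j, max (b j - ζ) 0 ^ (p - 1)) ∈
      stdSimplex ℝ (Fin A) :=
    ⟨fun i => by positivity, by rw [← sum_div, div_self hZ.ne']⟩
  refine ⟨hZ, hstar.1, hstar.2, le_antisymm (hmax ⟨_, hstar.1, hstar.2, rfl⟩) ?_⟩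
  change ζ ≤ lqObjective α q b _
  rw [lqObjective_max_sub_rpow_div_sum hpq hZ]
  have hα_le := le_rpow_sum_max_sub_rpow hpq hc hcζ.symm
  exact le_add_of_nonneg_right
    (div_nonneg (mul_nonneg (by positivity) (sub_nonneg.2 hα_le)) hZ.le)

/-- With `ζ_p = max_{c ∈ Δ_A} (-α ‖c‖_q + ⟨c, b⟩)`, the normalizer
`Z = ∑_i (b_i - ζ_p)^{p-1} 𝟙[b_i ≥ ζ_p]` is strictly positive, and
`c*_i = (b_i - ζ_p)^{p-1} 𝟙[b_i ≥ ζ_p] / Z` lies in `Δ_A` and is a maximizer: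
`-α ‖c*‖_q + ⟨c*, b⟩ = ζ_p`. -/
theorem stmt10 (A : ℕ) [NeZero A] (b : Fin A → ℝ)
    (hb : ∀ i j : Fin A, i ≤ j → b j ≤ b i)
    (α : ℝ) (hα : 0 < α) (p q : ℝ) (hp : 1 < p) (hq : q = p / (p - 1))
    (ζ : ℝ)
    (hζ : IsGreatest {y : ℝ | ∃ c : Fin A → ℝ, (∀ i, 0 ≤ c i) ∧ (∑ i, c i = 1) ∧
        y = -α * (∑ i, |c i| ^ q) ^ (1 / q) + ∑ i, c i * b i} ζ) :
    0 < (∑ i, if ζ ≤ b i then (b i - ζ) ^ (p - 1) else 0) ∧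
    (∀ i : Fin A, 0 ≤ (if ζ ≤ b i then (b i - ζ) ^ (p - 1) else 0) /
        (∑ j, if ζ ≤ b j then (b j - ζ) ^ (p - 1) else 0)) ∧
    (∑ i, (if ζ ≤ b i then (b i - ζ) ^ (p - 1) else 0) /
        (∑ j, if ζ ≤ b j then (b j - ζ) ^ (p - 1) else 0)) = 1 ∧
    -α * (∑ i, |(if ζ ≤ b i then (b i - ζ) ^ (p - 1) else 0) /
          (∑ j, if ζ ≤ b j then (b j - ζ) ^ (p - 1) else 0)| ^ q) ^ (1 / q)
      + ∑ i, ((if ζ ≤ b i then (b i - ζ) ^ (p - 1) else 0) /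
          (∑ j, if ζ ≤ b j then (b j - ζ) ^ (p - 1) else 0)) * b i = ζ :=
  stmt10_general A b α hα p q hp hq ζ hζ
end

section
/- Let ζ_p := max_{c ∈ Δ_A} ( −α ‖c‖_q + ⟨c, b⟩ ) and χ_p := max{ i ∈ {1,…,A} : b_i ≥ ζ_p } (this set is nonempty since b_1 ≥ ζ_p). Then for every k ∈ {1,…,A}: k ≤ χ_p if and only if ∑_{i=1}^{k} (b_i − b_k)^p ≤ α^p. -/
/-! Since `b` is antitone and `χ` is the last index with `ζ ≤ b χ`, `k ≤ χ` iff `ζ ≤ b k`, i.e. iff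
`-α ‖c‖_q + ⟨c, b - b k⟩ ≤ 0` on the whole simplex. Only the coordinates `i ≤ k` can make
`⟨c, b - b k⟩` positive, so Hölder gives this when `‖(b i - b k)_{i ≤ k}‖_p ≤ α`; conversely, when
that norm exceeds `α`, the Hölder extremiser `c i ∝ (b i - b k) ^ (p - 1)` (for `i ≤ k`) beats `b k`. -/

open Finset Real

variable {ι : Type*} [Fintype ι]

theorem sum_mul_eq_add_sum_mul_sub {c : ι → ℝ} (hc : ∑ i, c i = 1) (b : ι → ℝ) (t : ℝ) :
    ∑ i, c i * b i = t + ∑ i, c i * (b i - t) := by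
  simp only [mul_sub, sum_sub_distrib, ← sum_mul, hc, one_mul, add_sub_cancel]

theorem zero_lt_rpow_sum_abs_rpow_of_sum_eq_one (q : ℝ) {c : ι → ℝ} (hc : ∑ i, c i = 1) :
    0 < (∑ i, |c i| ^ q) ^ (1 / q) := by
  obtain ⟨i, -, hi⟩ := exists_ne_zero_of_sum_ne_zero (hc ▸ one_ne_zero)
  exact rpow_pos_of_pos (sum_pos' (fun j _ => by positivity)
    ⟨i, mem_univ i, rpow_pos_of_pos (abs_pos.2 hi) q⟩) _

theorem sum_mul_le_Lp_mul_Lq_of_nonpos_off (s : Finset ι) {p q : ℝ}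
    (hpq : p.HolderConjugate q) {c d : ι → ℝ} (hc : ∀ i, 0 ≤ c i) (hd : ∀ i ∉ s, d i ≤ 0) :
    ∑ i, c i * d i ≤ (∑ i ∈ s, |d i| ^ p) ^ (1 / p) * (∑ i, |c i| ^ q) ^ (1 / q) :=
  calc ∑ i, c i * d i ≤ ∑ i ∈ s, d i * c i := by
        simp only [mul_comm (d _)]
        exact sum_le_sum_of_subset_of_nonpos' (subset_univ s) fun i _ hi =>
          mul_nonpos_of_nonneg_of_nonpos (hc i) (hd i hi)
    _ ≤ (∑ i ∈ s, |d i| ^ p) ^ (1 / p) * (∑ i ∈ s, |c i| ^ q) ^ (1 / q) :=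
        inner_le_Lp_mul_Lq s d c hpq
    _ ≤ (∑ i ∈ s, |d i| ^ p) ^ (1 / p) * (∑ i, |c i| ^ q) ^ (1 / q) := by
        gcongr
        · exact hpq.symm.one_div_nonneg
        · exact subset_univ s

theorem exists_simplex_sum_mul_eq_Lp_mul_Lq (s : Finset ι) {p q : ℝ}
    (hpq : p.HolderConjugate q) {d : ι → ℝ} (hd : ∀ i ∈ s, 0 ≤ d i)
    (hS : 0 < ∑ i ∈ s, d i ^ p) :
    ∃ c : ι → ℝ, (∀ i, 0 ≤ c i) ∧ ∑ i, c i = 1 ∧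
      ∑ i, c i * d i = (∑ i ∈ s, d i ^ p) ^ (1 / p) * (∑ i, |c i| ^ q) ^ (1 / q) := by
  classical
  set S := ∑ i ∈ s, d i ^ p
  set T := ∑ i ∈ s, d i ^ (p - 1)
  have hT : 0 < T := by
    obtain ⟨i, hi, hdi⟩ := exists_lt_of_sum_lt (sum_const_zero.trans_lt hS)
    have hdi_ne : d i ≠ 0 := by
      rintro h
      rw [h, zero_rpow hpq.ne_zero] at hdi
      exact hdi.false
    exact sum_pos' (fun j hj => rpow_nonneg (hd j hj) _)
      ⟨i, hi, rpow_pos_of_pos ((hd i hi).lt_of_ne' hdi_ne) _⟩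
  have hmul : ∀ i ∈ s, d i ^ (p - 1) * d i = d i ^ p := fun i hi => by
    rw [← rpow_add_one' (hd i hi) (by simpa using hpq.ne_zero), sub_add_cancel]
  have hpow : ∀ i ∈ s, (d i ^ (p - 1)) ^ q = d i ^ p := fun i hi => by
    rw [← rpow_mul (hd i hi), hpq.sub_one_mul_conj]
  refine ⟨fun i => if i ∈ s then d i ^ (p - 1) / T else 0, fun i => ?_, ?_, ?_⟩
  · dsimp only
    split_ifs with hi
    · exact div_nonneg (rpow_nonneg (hd i hi) _) hT.le
    · exact le_rfl
  · rw [sum_ite_mem, univ_inter, ← sum_div, div_self hT.ne']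
  · have hcd : ∑ i, (if i ∈ s then d i ^ (p - 1) / T else 0) * d i = S / T := by
      simp only [ite_mul, zero_mul]
      rw [sum_ite_mem, univ_inter, sum_div]
      exact sum_congr rfl fun i hi => by rw [div_mul_eq_mul_div, hmul i hi]
    have hcq : ∑ i, |if i ∈ s then d i ^ (p - 1) / T else 0| ^ q = S / T ^ q := by
      have hterm : ∀ i, |if i ∈ s then d i ^ (p - 1) / T else 0| ^ q =
          if i ∈ s then d i ^ p / T ^ q else 0 := fun i => by
        split_ifs with hi
        · rw [abs_of_nonneg (div_nonneg (rpow_nonneg (hd i hi) _) hT.le),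
            div_rpow (rpow_nonneg (hd i hi) _) hT.le, hpow i hi]
        · rw [abs_zero, zero_rpow hpq.symm.ne_zero]
      rw [sum_congr rfl fun i _ => hterm i, sum_ite_mem, univ_inter, sum_div]
    have hnorm : (S / T ^ q) ^ (1 / q) = S ^ (1 / q) / T := by
      rw [div_rpow hS.le (by positivity), ← rpow_mul hT.le, mul_one_div_cancel hpq.symm.ne_zero,
        rpow_one]
    have hsplit : S ^ (1 / p) * S ^ (1 / q) = S := by
      rw [← rpow_add hS, hpq.one_div_add_one_div, div_one, rpow_one]
    rw [hcd, hcq, hnorm, mul_div_assoc', hsplit]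

theorem exists_simplex_lt_neg_mul_Lq_add_sum_mul (s : Finset ι) {p q α t : ℝ}
    (hpq : p.HolderConjugate q) (hα : 0 ≤ α) {b : ι → ℝ} (hb : ∀ i ∈ s, t ≤ b i)
    (hS : α ^ p < ∑ i ∈ s, (b i - t) ^ p) :
    ∃ c : ι → ℝ, (∀ i, 0 ≤ c i) ∧ ∑ i, c i = 1 ∧
      t < -α * (∑ i, |c i| ^ q) ^ (1 / q) + ∑ i, c i * b i := by
  obtain ⟨c, hc, hc1, heq⟩ := exists_simplex_sum_mul_eq_Lp_mul_Lq s hpq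
    (fun i hi => sub_nonneg.2 (hb i hi)) ((rpow_nonneg hα p).trans_lt hS)
  have hαS : α < (∑ i ∈ s, (b i - t) ^ p) ^ (1 / p) := by
    rw [← rpow_rpow_inv hα hpq.ne_zero, one_div]
    exact rpow_lt_rpow (rpow_nonneg hα p) hS (inv_pos.2 hpq.pos)
  have hN := zero_lt_rpow_sum_abs_rpow_of_sum_eq_one q hc1
  refine ⟨c, hc, hc1, ?_⟩
  rw [sum_mul_eq_add_sum_mul_sub hc1 b t, heq]
  linarith [mul_lt_mul_of_pos_right hαS hN]

theorem neg_mul_Lq_add_sum_mul_le (s : Finset ι) {p q α t : ℝ}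
    (hpq : p.HolderConjugate q) (hα : 0 ≤ α) {b : ι → ℝ} (hb : ∀ i ∉ s, b i ≤ t)
    (hS : ∑ i ∈ s, |b i - t| ^ p ≤ α ^ p) {c : ι → ℝ} (hc : ∀ i, 0 ≤ c i)
    (hc1 : ∑ i, c i = 1) :
    -α * (∑ i, |c i| ^ q) ^ (1 / q) + ∑ i, c i * b i ≤ t := by
  have hLp : (∑ i ∈ s, |b i - t| ^ p) ^ (1 / p) ≤ α := by
    rw [← rpow_rpow_inv hα hpq.ne_zero, one_div]
    exact rpow_le_rpow (by positivity) hS (inv_nonneg.2 hpq.nonneg)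
  have hN : 0 ≤ (∑ i, |c i| ^ q) ^ (1 / q) := by positivity
  have hHolder := sum_mul_le_Lp_mul_Lq_of_nonpos_off s hpq hc (d := fun i => b i - t)
    fun i hi => sub_nonpos.2 (hb i hi)
  rw [sum_mul_eq_add_sum_mul_sub hc1 b t]
  linarith [mul_le_mul_of_nonneg_right hLp hN]

theorem stmt11_general (A : ℕ) (b : Fin A → ℝ)
    (hb : ∀ i j : Fin A, i ≤ j → b j ≤ b i)
    (α : ℝ) (hα : 0 < α) (p q : ℝ) (hp : 1 < p) (hq : q = p / (p - 1))
    (ζ : ℝ)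
    (hζ : IsGreatest {y : ℝ | ∃ c : Fin A → ℝ, (∀ i, 0 ≤ c i) ∧ (∑ i, c i = 1) ∧
        y = -α * (∑ i, |c i| ^ q) ^ (1 / q) + ∑ i, c i * b i} ζ)
    (χ : Fin A) (hχ : IsGreatest {i : Fin A | ζ ≤ b i} χ) :
    ∀ k : Fin A, k ≤ χ ↔
      (∑ i ∈ Finset.univ.filter (fun i : Fin A => i ≤ k), (b i - b k) ^ p) ≤ α ^ p := by
  have hpq : p.HolderConjugate q := (holderConjugate_iff_eq_conjExponent hp).2 hq
  intro k
  have hsorted : ∀ i ∈ univ.filter (· ≤ k), b k ≤ b i := fun i hi => hb i k (mem_filter.1 hi).2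
  rw [show k ≤ χ ↔ ζ ≤ b k from ⟨fun h => hχ.1.trans (hb k χ h), fun h => hχ.2 h⟩]
  constructor
  · intro hζk
    by_contra! hS
    obtain ⟨c, hc, hc1, hlt⟩ := exists_simplex_lt_neg_mul_Lq_add_sum_mul _ hpq hα.le hsorted hS
    exact (hlt.trans_le (hζ.2 ⟨c, hc, hc1, rfl⟩)).not_ge hζk
  · intro hS
    obtain ⟨c, hc, hc1, rfl⟩ := hζ.1
    refine neg_mul_Lq_add_sum_mul_le (univ.filter (· ≤ k)) hpq hα.le
      (fun i hi => hb k i (le_of_lt (by simpa using hi))) ?_ hc hc1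
    rwa [sum_congr rfl fun i hi => by rw [abs_of_nonneg (sub_nonneg.2 (hsorted i hi))]]

/-- With `ζ_p = max_{c ∈ Δ_A} (-α ‖c‖_q + ⟨c, b⟩)` and
`χ_p = max {i : b_i ≥ ζ_p}` (greatest such index), for every `k`:
`k ≤ χ_p ↔ ∑_{i=1}^k (b_i - b_k)^p ≤ α^p` (0-based: sum over `i ≤ k`). -/
theorem stmt11 (A : ℕ) [NeZero A] (b : Fin A → ℝ)
    (hb : ∀ i j : Fin A, i ≤ j → b j ≤ b i)
    (α : ℝ) (hα : 0 < α) (p q : ℝ) (hp : 1 < p) (hq : q = p / (p - 1))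
    (ζ : ℝ)
    (hζ : IsGreatest {y : ℝ | ∃ c : Fin A → ℝ, (∀ i, 0 ≤ c i) ∧ (∑ i, c i = 1) ∧
        y = -α * (∑ i, |c i| ^ q) ^ (1 / q) + ∑ i, c i * b i} ζ)
    (χ : Fin A) (hχ : IsGreatest {i : Fin A | ζ ≤ b i} χ) :
    ∀ k : Fin A, k ≤ χ ↔
      (∑ i ∈ Finset.univ.filter (fun i : Fin A => i ≤ k), (b i - b k) ^ p) ≤ α ^ p :=
  stmt11_general A b hb α hα p q hp hq ζ hζ χ hχ
end

section
/- Let ζ_p := max_{c ∈ Δ_A} ( −α ‖c‖_q + ⟨c, b⟩ ) and χ_p := max{ i ∈ {1,…,A} : b_i ≥ ζ_p }. Then for every k ∈ {1,…,A}: k ≤ χ_p if and only if there exists a real x with x ≤ b_k and ∑_{i=1}^{k} (b_i − x)^p = α^p. -/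
/-! Write `g t = ∑ i, (b i - t)₊ ^ p`. By Hölder, `⟨c, b⟩ - t ≤ ⟨c, (b - t)₊⟩ ≤ ‖c‖_q g(t)^(1/p)`
for `c` in the simplex, so `t` bounds every objective value as soon as `g t ≤ α ^ p`; conversely,
testing an upper bound `t` against the Hölder-extremal vector `c ∝ (b - t)₊ ^ (p - 1)` gives
`g t ≤ α ^ p`. So the upper bounds of the objective are exactly `{t | g t ≤ α ^ p}`, and as `ζ` is
the least of them and `g` is continuous, `g ζ = α ^ p`. For sorted `b` the indices with `ζ ≤ b i`
are those `≤ χ`: for `k ≤ χ` the intermediate value theorem on `[b k - α, b k]` produces `x`, while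
for `k > χ` every `x ≤ b k < ζ` makes the prefix sum exceed `g ζ = α ^ p`. -/

open Finset

lemma le_rpow_of_le_mul_rpow {p q α g : ℝ} (hpq : p.HolderConjugate q) (hg : 0 < g) (hα : 0 ≤ α)
    (h : g ≤ α * g ^ (1 / q)) : g ≤ α ^ p := by
  have hsplit : g ^ (1 / p) * g ^ (1 / q) = g := by
    rw [← Real.rpow_add hg, one_div, one_div, hpq.inv_add_inv_eq_one, Real.rpow_one]
  have : g ^ p⁻¹ ≤ α := by
    rw [← one_div]
    exact le_of_mul_le_mul_right (hsplit.trans_le h) (Real.rpow_pos_of_pos hg _)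
  exact (Real.rpow_inv_le_iff_of_pos hg.le hα hpq.pos).1 this

variable {ι : Type*} [Fintype ι]

noncomputable def excessPowSum (b : ι → ℝ) (p t : ℝ) : ℝ :=
  ∑ i, max (b i - t) 0 ^ p

def simplexObjectiveValues (α q : ℝ) (b : ι → ℝ) : Set ℝ :=
  {y | ∃ c : ι → ℝ, (∀ i, 0 ≤ c i) ∧ ∑ i, c i = 1 ∧
    y = -α * (∑ i, |c i| ^ q) ^ (1 / q) + ∑ i, c i * b i}

section excessPowSum

variable {b : ι → ℝ} {p : ℝ}

lemma excessPowSum_nonneg (t : ℝ) : 0 ≤ excessPowSum b p t :=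
  sum_nonneg fun _ _ => Real.rpow_nonneg (le_max_right _ _) p

lemma continuous_excessPowSum (hp : 0 ≤ p) : Continuous (excessPowSum b p) :=
  continuous_finsetSum _ fun _ _ =>
    (Real.continuous_rpow_const hp).comp ((continuous_const.sub continuous_id).max continuous_const)

lemma excessPowSum_eq_sum_filter (hp : p ≠ 0) (t : ℝ) :
    excessPowSum b p t = ∑ i ∈ univ.filter (fun i => t ≤ b i), (b i - t) ^ p := by
  rw [sum_filter]
  refine sum_congr rfl fun i _ => ?_
  split_ifs with h
  · rw [max_eq_left (sub_nonneg.2 h)]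
  · rw [max_eq_right (by linarith [not_le.1 h]), Real.zero_rpow hp]

lemma max_zero_rpow_sub_one_mul (hp : 1 < p) (y : ℝ) : max y 0 ^ (p - 1) * y = max y 0 ^ p := by
  rcases le_or_gt y 0 with h | h
  · rw [max_eq_right h, Real.zero_rpow (by linarith), zero_mul, Real.zero_rpow (by linarith)]
  · rw [max_eq_left h.le, ← Real.rpow_add_one h.ne', sub_add_cancel]

variable {q α : ℝ} (hpq : p.HolderConjugate q)
include hpq

lemma exists_mem_simplexObjectiveValues_of_excessPowSum_pos {t : ℝ}
    (ht : 0 < excessPowSum b p t) :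
    ∃ S > 0, t + (excessPowSum b p t - α * excessPowSum b p t ^ (1 / q)) / S ∈
      simplexObjectiveValues α q b := by
  set g := excessPowSum b p t
  set m : ι → ℝ := fun i => max (b i - t) 0
  have hg : g = ∑ i, m i ^ p := rfl
  have hm0 (i : ι) : 0 ≤ m i := le_max_right _ _
  set S := ∑ i, m i ^ (p - 1)
  have hS : 0 < S := by
    have hsum : ∑ _i : ι, (0 : ℝ) < ∑ i, m i ^ p := by simpa [hg] using ht
    obtain ⟨i, -, hi⟩ := exists_lt_of_sum_lt hsum
    have hmi : m i ≠ 0 := fun h => by rw [h, Real.zero_rpow hpq.ne_zero] at hi; exact hi.false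
    exact (Real.rpow_pos_of_pos ((hm0 i).lt_of_ne' hmi) _).trans_le
      (single_le_sum (fun j _ => Real.rpow_nonneg (hm0 j) _) (mem_univ i))
  -- the vector attaining equality in Hölder's inequality against `m`
  set c : ι → ℝ := fun i => m i ^ (p - 1) / S
  have hc0 (i : ι) : 0 ≤ c i := div_nonneg (Real.rpow_nonneg (hm0 i) _) hS.le
  have hc1 : ∑ i, c i = 1 := by rw [← sum_div, div_self hS.ne']
  have hnorm : (∑ i, |c i| ^ q) ^ (1 / q) = g ^ (1 / q) / S := by
    have : ∑ i, |c i| ^ q = g / S ^ q := by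
      rw [hg, sum_div]
      refine sum_congr rfl fun i _ => ?_
      rw [abs_of_nonneg (hc0 i), Real.div_rpow (Real.rpow_nonneg (hm0 i) _) hS.le,
        ← Real.rpow_mul (hm0 i), hpq.sub_one_mul_conj]
    rw [this, Real.div_rpow ht.le (by positivity), ← Real.rpow_mul hS.le, mul_one_div,
      div_self hpq.symm.ne_zero, Real.rpow_one]
  have hdot : ∑ i, c i * b i = t + g / S := by
    have : ∑ i, c i * (b i - t) = g / S := by
      rw [hg, sum_div]
      refine sum_congr rfl fun i _ => ?_
      rw [div_mul_eq_mul_div, max_zero_rpow_sub_one_mul hpq.lt]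
    simp only [mul_sub, sum_sub_distrib, ← sum_mul, hc1, one_mul] at this
    linarith
  refine ⟨S, hS, c, hc0, hc1, ?_⟩
  rw [hnorm, hdot]
  ring

variable (hα : 0 ≤ α)
include hα

lemma mem_upperBounds_of_excessPowSum_le {t : ℝ} (ht : excessPowSum b p t ≤ α ^ p) :
    t ∈ upperBounds (simplexObjectiveValues α q b) := by
  rintro _ ⟨c, hc0, hc1, rfl⟩
  set m : ι → ℝ := fun i => max (b i - t) 0
  have hm : ∑ i, |m i| ^ p = excessPowSum b p t :=
    sum_congr rfl fun i _ => by rw [abs_of_nonneg (le_max_right _ _)]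
  have hmα : (∑ i, |m i| ^ p) ^ (1 / p) ≤ α := by
    rw [hm, one_div, Real.rpow_inv_le_iff_of_pos (excessPowSum_nonneg t) hα hpq.pos]
    exact ht
  have hshift : ∑ i, c i * b i - t = ∑ i, c i * (b i - t) := by
    simp only [mul_sub, sum_sub_distrib, ← sum_mul, hc1, one_mul]
  have : ∑ i, c i * b i - t ≤ (∑ i, |c i| ^ q) ^ (1 / q) * α :=
    calc ∑ i, c i * b i - t = ∑ i, c i * (b i - t) := hshift
      _ ≤ ∑ i, c i * m i :=
        sum_le_sum fun i _ => mul_le_mul_of_nonneg_left (le_max_left _ _) (hc0 i)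
      _ ≤ (∑ i, |c i| ^ q) ^ (1 / q) * (∑ i, |m i| ^ p) ^ (1 / p) :=
        Real.inner_le_Lp_mul_Lq univ c m hpq.symm
      _ ≤ (∑ i, |c i| ^ q) ^ (1 / q) * α := by gcongr
  linarith

lemma excessPowSum_le_of_mem_upperBounds {t : ℝ}
    (ht : t ∈ upperBounds (simplexObjectiveValues α q b)) : excessPowSum b p t ≤ α ^ p := by
  rcases (excessPowSum_nonneg (b := b) (p := p) t).eq_or_lt with h0 | hpos
  · rw [← h0]
    positivity
  obtain ⟨S, hS, hmem⟩ := exists_mem_simplexObjectiveValues_of_excessPowSum_pos hpq hpos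
  have : excessPowSum b p t - α * excessPowSum b p t ^ (1 / q) ≤ 0 * S :=
    (div_le_iff₀ hS).1 (by linarith [ht hmem])
  exact le_rpow_of_le_mul_rpow hpq hpos hα (by linarith)

lemma mem_upperBounds_simplexObjectiveValues_iff {t : ℝ} :
    t ∈ upperBounds (simplexObjectiveValues α q b) ↔ excessPowSum b p t ≤ α ^ p :=
  ⟨excessPowSum_le_of_mem_upperBounds hpq hα, mem_upperBounds_of_excessPowSum_le hpq hα⟩

lemma excessPowSum_eq_of_isGreatest {ζ : ℝ} (hζ : IsGreatest (simplexObjectiveValues α q b) ζ) :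
    excessPowSum b p ζ = α ^ p := by
  refine le_antisymm ((mem_upperBounds_simplexObjectiveValues_iff hpq hα).1 hζ.2) ?_
  have hlt : ∀ t < ζ, α ^ p ≤ excessPowSum b p t := fun t ht =>
    le_of_not_ge fun h => ((mem_upperBounds_simplexObjectiveValues_iff hpq hα).2 h hζ.1).not_gt ht
  exact ge_of_tendsto ((continuous_excessPowSum hpq.nonneg).continuousAt.tendsto.mono_left
    nhdsWithin_le_nhds) (eventually_nhdsWithin_of_forall (s := Set.Iio ζ) hlt)

end excessPowSum

section Antitone

variable [LinearOrder ι] {b : ι → ℝ} {p : ℝ}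

lemma exists_le_sum_filter_le_sub_rpow_eq (hb : Antitone b) (hp : 0 < p) {α t : ℝ} (hα : 0 ≤ α)
    (ht : excessPowSum b p t ≤ α ^ p) {k : ι} (hk : t ≤ b k) :
    ∃ x ≤ b k, ∑ i ∈ univ.filter (fun i => i ≤ k), (b i - x) ^ p = α ^ p := by
  set F : ℝ → ℝ := fun x => ∑ i ∈ univ.filter (fun i => i ≤ k), (b i - x) ^ p
  have hF : Continuous F := continuous_finsetSum _ fun _ _ =>
    (Real.continuous_rpow_const hp.le).comp (continuous_const.sub continuous_id)
  have hlow : F (b k) ≤ α ^ p :=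
    calc F (b k) ≤ ∑ i ∈ univ.filter (fun i => i ≤ k), max (b i - t) 0 ^ p :=
          sum_le_sum fun i hi => Real.rpow_le_rpow (sub_nonneg.2 (hb (mem_filter.1 hi).2))
            ((sub_le_sub_left hk _).trans (le_max_left _ _)) hp.le
      _ ≤ excessPowSum b p t := sum_le_sum_of_subset_of_nonneg (filter_subset _ _)
          fun _ _ _ => Real.rpow_nonneg (le_max_right _ _) _
      _ ≤ α ^ p := ht
  have hhigh : α ^ p ≤ F (b k - α) :=
    calc α ^ p = (b k - (b k - α)) ^ p := by rw [sub_sub_cancel]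
      _ ≤ F (b k - α) := single_le_sum (f := fun i => (b i - (b k - α)) ^ p)
          (fun i hi => Real.rpow_nonneg (by linarith [hb (mem_filter.1 hi).2]) _) (by simp)
  obtain ⟨x, hx, hFx⟩ := intermediate_value_Icc' (by linarith) hF.continuousOn ⟨hlow, hhigh⟩
  exact ⟨x, hx.2, hFx⟩

lemma excessPowSum_lt_sum_filter_le_sub_rpow (hb : Antitone b) (hp : 0 < p) {t x : ℝ} {j k : ι}
    (hj : t ≤ b j) (hk : b k < t) (hx : x ≤ b k) :
    excessPowSum b p t < ∑ i ∈ univ.filter (fun i => i ≤ k), (b i - x) ^ p := by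
  rw [excessPowSum_eq_sum_filter hp.ne']
  calc ∑ i ∈ univ.filter (fun i => t ≤ b i), (b i - t) ^ p
      < ∑ i ∈ univ.filter (fun i => t ≤ b i), (b i - x) ^ p :=
        sum_lt_sum (fun i hi => Real.rpow_le_rpow (sub_nonneg.2 (mem_filter.1 hi).2)
          (by linarith) hp.le) ⟨j, by simp [hj], Real.rpow_lt_rpow (sub_nonneg.2 hj)
          (by linarith) hp⟩
    _ ≤ ∑ i ∈ univ.filter (fun i => i ≤ k), (b i - x) ^ p := by
        refine sum_le_sum_of_subset_of_nonneg (fun i hi => ?_) fun i hi _ => ?_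
        · simp only [mem_filter, mem_univ, true_and] at hi ⊢
          exact le_of_not_gt fun hki => (hk.trans_le hi).not_ge (hb hki.le)
        · exact Real.rpow_nonneg (by linarith [hb (mem_filter.1 hi).2]) _

end Antitone

theorem stmt14_general (A : ℕ) (b : Fin A → ℝ)
    (hb : ∀ i j : Fin A, i ≤ j → b j ≤ b i)
    (α : ℝ) (hα : 0 < α) (p q : ℝ) (hp : 1 < p) (hq : q = p / (p - 1))
    (ζ : ℝ)
    (hζ : IsGreatest {y : ℝ | ∃ c : Fin A → ℝ, (∀ i, 0 ≤ c i) ∧ (∑ i, c i = 1) ∧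
        y = -α * (∑ i, |c i| ^ q) ^ (1 / q) + ∑ i, c i * b i} ζ)
    (χ : Fin A) (hχ : IsGreatest {i : Fin A | ζ ≤ b i} χ) :
    ∀ k : Fin A, k ≤ χ ↔
      ∃ x : ℝ, x ≤ b k ∧
        (∑ i ∈ Finset.univ.filter (fun i : Fin A => i ≤ k), (b i - x) ^ p) = α ^ p := by
  have hpq : p.HolderConjugate q := (Real.holderConjugate_iff_eq_conjExponent hp).2 hq
  have hb' : Antitone b := hb
  have hζα : excessPowSum b p ζ = α ^ p := excessPowSum_eq_of_isGreatest hpq hα.le hζ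
  intro k
  rw [show k ≤ χ ↔ ζ ≤ b k from ⟨fun h => hχ.1.trans (hb' h), fun h => hχ.2 h⟩]
  refine ⟨exists_le_sum_filter_le_sub_rpow_eq hb' hpq.pos hα.le hζα.le, ?_⟩
  rintro ⟨x, hx, hsum⟩
  by_contra! hk
  exact (excessPowSum_lt_sum_filter_le_sub_rpow hb' hpq.pos hχ.1 hk hx).ne (hζα.trans hsum.symm)

/-- With `ζ_p = max_{c ∈ Δ_A} (-α ‖c‖_q + ⟨c, b⟩)` and
`χ_p = max {i : b_i ≥ ζ_p}`, for every `k`: `k ≤ χ_p` iff there exists a real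
`x ≤ b_k` with `∑_{i=1}^k (b_i - x)^p = α^p` (0-based: sum over `i ≤ k`). -/
theorem stmt14 (A : ℕ) [NeZero A] (b : Fin A → ℝ)
    (hb : ∀ i j : Fin A, i ≤ j → b j ≤ b i)
    (α : ℝ) (hα : 0 < α) (p q : ℝ) (hp : 1 < p) (hq : q = p / (p - 1))
    (ζ : ℝ)
    (hζ : IsGreatest {y : ℝ | ∃ c : Fin A → ℝ, (∀ i, 0 ≤ c i) ∧ (∑ i, c i = 1) ∧
        y = -α * (∑ i, |c i| ^ q) ^ (1 / q) + ∑ i, c i * b i} ζ)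
    (χ : Fin A) (hχ : IsGreatest {i : Fin A | ζ ≤ b i} χ) :
    ∀ k : Fin A, k ≤ χ ↔
      ∃ x : ℝ, x ≤ b k ∧
        (∑ i ∈ Finset.univ.filter (fun i : Fin A => i ≤ k), (b i - x) ^ p) = α ^ p :=
  stmt14_general A b hb α hα p q hp hq ζ hζ χ hχ
end

section
/- Let ζ_p := max_{c ∈ Δ_A} ( −α ‖c‖_q + ⟨c, b⟩ ) and χ_p := max{ i ∈ {1,…,A} : b_i ≥ ζ_p }. Suppose 1 ≤ k < A, k ≤ χ_p, and λ_k is a real with λ_k ≤ b_k and ∑_{i=1}^{k} (b_i − λ_k)^p = α^p. Then: (i) if λ_k ≤ b_{k+1}, then k + 1 ≤ χ_p; (ii) if λ_k > b_{k+1}, then χ_p = k. -/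
/-!
Lower bound `λ_k ≤ ζ_p`: the Hölder-dual vector `c ∝ (b_i - λ_k)^(p-1)` supported on
`{i ≤ k}` satisfies `⟨c, b⟩ = λ_k + ⟨c, b - λ_k⟩ = λ_k + α ‖c‖_q`, so its value is exactly `λ_k`.

Upper bound when `λ_k ≤ b_{k+1}`: with `x = (b - b_{k+1})⁺` we have `‖x‖_p ≤ α` (only `i ≤ k`
contribute, each at most `b_i - λ_k`), and Hölder gives
`⟨c, b⟩ ≤ b_{k+1} + ⟨c, x⟩ ≤ b_{k+1} + α ‖c‖_q` on the simplex, so `ζ_p ≤ b_{k+1}`.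

Since `b` is sorted, both parts follow from the definition of `χ_p`.
-/
open Finset

noncomputable def penalizedValue {ι : Type*} [Fintype ι] (α q : ℝ) (b c : ι → ℝ) : ℝ :=
  -α * (∑ i, |c i| ^ q) ^ (1 / q) + ∑ i, c i * b i

section HolderDual

variable {ι : Type*} [Fintype ι] {p q α : ℝ} {x : ι → ℝ}

/-- Hölder's inequality `∑ i, c i * x i ≤ ‖x‖_p ‖c‖_q` is an equality at
`c = holderDual p x`. -/
noncomputable def holderDual (p : ℝ) (x : ι → ℝ) (i : ι) : ℝ :=
  x i ^ (p - 1) / ∑ j, x j ^ (p - 1)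

lemma holderDual_nonneg (hx : ∀ i, 0 ≤ x i) (i : ι) : 0 ≤ holderDual p x i :=
  div_nonneg (Real.rpow_nonneg (hx i) _) (sum_nonneg fun j _ => Real.rpow_nonneg (hx j) _)

lemma holderDual_eq_zero (hp : 1 < p) {i : ι} (hi : x i = 0) : holderDual p x i = 0 := by
  rw [holderDual, hi, Real.zero_rpow (by linarith), zero_div]

lemma sum_rpow_sub_one_pos (hp : 1 < p) (hx : ∀ i, 0 ≤ x i) (hpos : 0 < ∑ i, x i ^ p) :
    0 < ∑ i, x i ^ (p - 1) := by
  obtain ⟨i, -, hi⟩ := exists_lt_of_sum_lt (f := fun _ => (0 : ℝ)) (by simpa using hpos)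
  have hxi : 0 < x i := (hx i).lt_of_ne fun h => by
    simp [← h, Real.zero_rpow (by linarith : p ≠ 0)] at hi
  exact sum_pos' (fun j _ => Real.rpow_nonneg (hx j) _)
    ⟨i, mem_univ i, Real.rpow_pos_of_pos hxi _⟩

lemma sum_holderDual (hp : 1 < p) (hx : ∀ i, 0 ≤ x i) (hpos : 0 < ∑ i, x i ^ p) :
    ∑ i, holderDual p x i = 1 := by
  simp only [holderDual, ← sum_div]
  exact div_self (sum_rpow_sub_one_pos hp hx hpos).ne'

lemma Lq_holderDual (hpq : p.HolderConjugate q) (hx : ∀ i, 0 ≤ x i) (hα : 0 ≤ α)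
    (hxp : ∑ i, x i ^ p = α ^ p) :
    (∑ i, |holderDual p x i| ^ q) ^ (1 / q) = α ^ (p - 1) / ∑ i, x i ^ (p - 1) := by
  set S := ∑ i, x i ^ (p - 1)
  have hS : 0 ≤ S := sum_nonneg fun j _ => Real.rpow_nonneg (hx j) _
  have hterm : ∀ i, |holderDual p x i| ^ q = x i ^ p / S ^ q := fun i => by
    rw [abs_of_nonneg (holderDual_nonneg hx i), holderDual,
      Real.div_rpow (Real.rpow_nonneg (hx i) _) hS, ← Real.rpow_mul (hx i), hpq.sub_one_mul_conj]
  rw [sum_congr rfl fun i _ => hterm i, ← sum_div, hxp,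
    Real.div_rpow (Real.rpow_nonneg hα _) (Real.rpow_nonneg hS _), ← Real.rpow_mul hα,
    ← Real.rpow_mul hS, mul_one_div, mul_one_div, div_self hpq.symm.ne_zero, Real.rpow_one,
    hpq.div_conj_eq_sub_one]

lemma inner_holderDual (hp : 1 < p) (hx : ∀ i, 0 ≤ x i) (hxp : ∑ i, x i ^ p = α ^ p) :
    ∑ i, holderDual p x i * x i = α ^ p / ∑ i, x i ^ (p - 1) := by
  have hterm : ∀ i, holderDual p x i * x i = x i ^ p / ∑ i, x i ^ (p - 1) := fun i => by
    rw [holderDual, div_mul_eq_mul_div, ← Real.rpow_add_one' (hx i) (by linarith), sub_add_cancel]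
  rw [sum_congr rfl fun i _ => hterm i, ← sum_div, hxp]

lemma mul_Lq_holderDual (hpq : p.HolderConjugate q) (hx : ∀ i, 0 ≤ x i) (hα : 0 ≤ α)
    (hxp : ∑ i, x i ^ p = α ^ p) :
    α * (∑ i, |holderDual p x i| ^ q) ^ (1 / q) = ∑ i, holderDual p x i * x i := by
  rw [Lq_holderDual hpq hx hα hxp, inner_holderDual hpq.lt hx hxp, mul_div_assoc',
    ← Real.rpow_one_add' hα (by linarith [hpq.lt]), add_sub_cancel]

end HolderDual

section PenalizedValue

variable {ι : Type*} [Fintype ι] {p q α : ℝ} {b : ι → ℝ}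

lemma exists_simplex_penalizedValue_eq [DecidableEq ι] (hpq : p.HolderConjugate q)
    (hα : 0 < α) {S : Finset ι} {lam : ℝ} (hS : ∀ i ∈ S, lam ≤ b i)
    (hsum : ∑ i ∈ S, (b i - lam) ^ p = α ^ p) :
    ∃ c : ι → ℝ, (∀ i, 0 ≤ c i) ∧ ∑ i, c i = 1 ∧ penalizedValue α q b c = lam := by
  set x : ι → ℝ := fun i => if i ∈ S then b i - lam else 0
  have hx : ∀ i, 0 ≤ x i := fun i => by
    by_cases hi : i ∈ S <;> simp [x, hi, hS i]
  have hxp : ∑ i, x i ^ p = α ^ p := by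
    have hterm : ∀ i, x i ^ p = if i ∈ S then (b i - lam) ^ p else 0 := fun i => by
      by_cases hi : i ∈ S <;> simp [x, hi, Real.zero_rpow hpq.ne_zero]
    rw [sum_congr rfl fun i _ => hterm i, sum_ite_mem, univ_inter, hsum]
  set c := holderDual p x
  have hcb : ∀ i, c i * b i = c i * lam + c i * x i := fun i => by
    by_cases hi : i ∈ S
    · simp only [x, if_pos hi]; ring
    · simp [c, holderDual_eq_zero hpq.lt (show x i = 0 from if_neg hi)]
  refine ⟨c, holderDual_nonneg hx, sum_holderDual hpq.lt hx (hxp ▸ by positivity), ?_⟩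
  rw [penalizedValue, sum_congr rfl fun i _ => hcb i, sum_add_distrib, ← sum_mul,
    sum_holderDual hpq.lt hx (hxp ▸ by positivity), ← mul_Lq_holderDual hpq hx hα.le hxp]
  ring

lemma inner_le_add_Lp_mul_Lq (hpq : p.HolderConjugate q) {c : ι → ℝ} (hc0 : ∀ i, 0 ≤ c i)
    (hc1 : ∑ i, c i = 1) (m : ℝ) :
    ∑ i, c i * b i ≤
      m + (∑ i, max (b i - m) 0 ^ p) ^ (1 / p) * (∑ i, |c i| ^ q) ^ (1 / q) := by
  set x : ι → ℝ := fun i => max (b i - m) 0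
  calc ∑ i, c i * b i ≤ ∑ i, c i * (m + x i) :=
        sum_le_sum fun i _ =>
          mul_le_mul_of_nonneg_left (by linarith [le_max_left (b i - m) 0]) (hc0 i)
    _ = m + ∑ i, x i * c i := by
        simp only [mul_add, sum_add_distrib, ← sum_mul, hc1, one_mul, mul_comm (c _) (x _)]
    _ ≤ m + (∑ i, |x i| ^ p) ^ (1 / p) * (∑ i, |c i| ^ q) ^ (1 / q) := by
        gcongr; exact Real.inner_le_Lp_mul_Lq _ _ _ hpq
    _ = _ := by simp only [x, abs_of_nonneg (le_max_right _ (0 : ℝ))]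

lemma penalizedValue_le (hpq : p.HolderConjugate q) {c : ι → ℝ} (hc0 : ∀ i, 0 ≤ c i)
    (hc1 : ∑ i, c i = 1) {m : ℝ} (hm : ∑ i, max (b i - m) 0 ^ p ≤ α ^ p) (hα : 0 ≤ α) :
    penalizedValue α q b c ≤ m := by
  have hLp : (∑ i, max (b i - m) 0 ^ p) ^ (1 / p) ≤ α := by
    calc _ ≤ (α ^ p) ^ (1 / p) := by gcongr; exact one_div_nonneg.2 hpq.nonneg
      _ = α := by rw [← Real.rpow_mul hα, mul_one_div_cancel hpq.ne_zero, Real.rpow_one]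
  have hLq : 0 ≤ (∑ i, |c i| ^ q) ^ (1 / q) := by positivity
  have := inner_le_add_Lp_mul_Lq hpq hc0 hc1 (b := b) m
  rw [penalizedValue]
  nlinarith

lemma sum_max_sub_rpow_le {S : Finset ι} {lam m : ℝ} (hp : 0 < p) (hlam : lam ≤ m)
    (hS : ∀ i ∈ S, lam ≤ b i) (hSc : ∀ i ∉ S, b i ≤ m) :
    ∑ i, max (b i - m) 0 ^ p ≤ ∑ i ∈ S, (b i - lam) ^ p := by
  rw [← sum_subset (subset_univ S) fun i _ hi => by
    rw [max_eq_right (by linarith [hSc i hi]), Real.zero_rpow hp.ne']]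
  exact sum_le_sum fun i hi =>
    Real.rpow_le_rpow (le_max_right _ _) (max_le (by linarith) (by linarith [hS i hi])) hp.le

end PenalizedValue

theorem stmt15_general (A : ℕ) (b : Fin A → ℝ)
    (hb : ∀ i j : Fin A, i ≤ j → b j ≤ b i)
    (α : ℝ) (hα : 0 < α) (p q : ℝ) (hp : 1 < p) (hq : q = p / (p - 1))
    (ζ : ℝ)
    (hζ : IsGreatest {y : ℝ | ∃ c : Fin A → ℝ, (∀ i, 0 ≤ c i) ∧ (∑ i, c i = 1) ∧
        y = -α * (∑ i, |c i| ^ q) ^ (1 / q) + ∑ i, c i * b i} ζ)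
    (χ : Fin A) (hχ : IsGreatest {i : Fin A | ζ ≤ b i} χ)
    (k : Fin A) (hk : (k : ℕ) + 1 < A) (hkχ : k ≤ χ)
    (lam : ℝ) (hlam : lam ≤ b k)
    (hsum : (∑ i ∈ Finset.univ.filter (fun i : Fin A => i ≤ k), (b i - lam) ^ p) = α ^ p) :
    (lam ≤ b ⟨(k : ℕ) + 1, hk⟩ → (⟨(k : ℕ) + 1, hk⟩ : Fin A) ≤ χ) ∧
    (b ⟨(k : ℕ) + 1, hk⟩ < lam → χ = k) := by
  have hpq : p.HolderConjugate q := (Real.holderConjugate_iff_eq_conjExponent hp).2 hq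
  set k1 : Fin A := ⟨(k : ℕ) + 1, hk⟩
  have hle_k1 : ∀ {i : Fin A}, k < i → k1 ≤ i := fun h => Fin.le_def.2 h
  have hS : ∀ i ∈ univ.filter (· ≤ k), lam ≤ b i := fun i hi =>
    hlam.trans (hb i k (mem_filter.1 hi).2)
  refine ⟨fun hlam1 => hχ.2 ?_, fun hlam1 => le_antisymm (not_lt.1 fun hlt => ?_) hkχ⟩
  · obtain ⟨c, hc0, hc1, rfl⟩ := hζ.1
    refine penalizedValue_le hpq hc0 hc1 (hsum ▸ sum_max_sub_rpow_le hpq.pos hlam1 hS ?_) hα.le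
    exact fun i hi => hb k1 i (hle_k1 (by simpa using hi))
  · obtain ⟨c, hc0, hc1, hc⟩ := exists_simplex_penalizedValue_eq (q := q) hpq hα hS hsum
    have hlam_ζ : lam ≤ ζ := hζ.2 ⟨c, hc0, hc1, hc.symm⟩
    linarith [show ζ ≤ b χ from hχ.1, hb k1 χ (hle_k1 hlt)]

/-- With `ζ_p = max_{c ∈ Δ_A} (-α ‖c‖_q + ⟨c, b⟩)` and
`χ_p = max {i : b_i ≥ ζ_p}`: if `k < A` (so `k+1` is a valid index), `k ≤ χ_p`,
`λ_k ≤ b_k` and `∑_{i=1}^k (b_i - λ_k)^p = α^p` (0-based: sum over `i ≤ k`), then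
(i) `λ_k ≤ b_{k+1}` implies `k+1 ≤ χ_p`; (ii) `λ_k > b_{k+1}` implies `χ_p = k`. -/
theorem stmt15 (A : ℕ) [NeZero A] (b : Fin A → ℝ)
    (hb : ∀ i j : Fin A, i ≤ j → b j ≤ b i)
    (α : ℝ) (hα : 0 < α) (p q : ℝ) (hp : 1 < p) (hq : q = p / (p - 1))
    (ζ : ℝ)
    (hζ : IsGreatest {y : ℝ | ∃ c : Fin A → ℝ, (∀ i, 0 ≤ c i) ∧ (∑ i, c i = 1) ∧
        y = -α * (∑ i, |c i| ^ q) ^ (1 / q) + ∑ i, c i * b i} ζ)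
    (χ : Fin A) (hχ : IsGreatest {i : Fin A | ζ ≤ b i} χ)
    (k : Fin A) (hk : (k : ℕ) + 1 < A) (hkχ : k ≤ χ)
    (lam : ℝ) (hlam : lam ≤ b k)
    (hsum : (∑ i ∈ Finset.univ.filter (fun i : Fin A => i ≤ k), (b i - lam) ^ p) = α ^ p) :
    (lam ≤ b ⟨(k : ℕ) + 1, hk⟩ → (⟨(k : ℕ) + 1, hk⟩ : Fin A) ≤ χ) ∧
    (b ⟨(k : ℕ) + 1, hk⟩ < lam → χ = k) :=
  stmt15_general A b hb α hα p q hp hq ζ hζ χ hχ k hk hkχ lam hlam hsum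
end

section
/- Let A ≥ 1 be an integer, b ∈ ℝ^A sorted in descending order (b_1 ≥ b_2 ≥ ⋯ ≥ b_A), p ≥ 1 real, and define f(x) := ( ∑_{i : b_i ≥ x} (b_i − x)^p )^{1/p} for x ∈ [b_A, b_1]. Then (i) f(x) − f(y) ≥ y − x for all x ≤ y in [b_A, b_1]; (ii) consequently, for any α ≥ 0, γ ∈ [0,1], β ≥ 0, ε ≥ 0 and reals κ, κ̂ with |κ − κ̂| ≤ ε, if λ, λ̂ ∈ [b_A, b_1] satisfy f(λ) = α + γβκ and f(λ̂) = α + γβκ̂, then |λ − λ̂| ≤ γβε. -/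
/-!
Put `u_i = b_i - y ≥ 0` on the indices with `b_i ≥ y` and `M = ‖u + (y - x)‖_p`. Every
`u_i + (y - x) ≤ M`, so `u_i ≤ θ (u_i + (y - x))` with `θ = (M - (y - x)) / M`, and summing
`p`-th powers gives `‖u‖_p ≤ θ M = M - (y - x)`. The indices with `x ≤ b_i < y` only add to
`f(x)`. Part (ii) follows since `|λ - λ̂| ≤ |f(λ) - f(λ̂)| = γβ|κ - κ̂|`.
-/

open Finset Real

theorem Real.Lp_add_le_Lp_add_const {ι : Type*} {s : Finset ι} (hs : s.Nonempty) {a : ι → ℝ}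
    (ha : ∀ i ∈ s, 0 ≤ a i) {c : ℝ} (hc : 0 ≤ c) {p : ℝ} (hp : 0 < p) :
    (∑ i ∈ s, a i ^ p) ^ (1 / p) + c ≤ (∑ i ∈ s, (a i + c) ^ p) ^ (1 / p) := by
  obtain rfl | hc := hc.eq_or_lt
  · simp
  simp only [one_div]
  set M := (∑ i ∈ s, (a i + c) ^ p) ^ p⁻¹
  have hac : ∀ i ∈ s, 0 ≤ a i + c := fun i hi => by linarith [ha i hi]
  have hsum : 0 ≤ ∑ i ∈ s, (a i + c) ^ p := sum_nonneg fun i hi => rpow_nonneg (hac i hi) p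
  have hMp : M ^ p = ∑ i ∈ s, (a i + c) ^ p := by
    rw [← rpow_mul hsum, inv_mul_cancel₀ hp.ne', rpow_one]
  have hle : ∀ i ∈ s, a i + c ≤ M := fun i hi =>
    (le_rpow_inv_iff_of_pos (hac i hi) hsum hp).2 <|
      single_le_sum (f := fun j => (a j + c) ^ p) (fun j hj => rpow_nonneg (hac j hj) p) hi
  obtain ⟨i₀, hi₀⟩ := hs
  have hcM : c ≤ M := by linarith [ha i₀ hi₀, hle i₀ hi₀]
  have hM : 0 < M := hc.trans_le hcM
  set θ := (M - c) / M
  have hθ : 0 ≤ θ := div_nonneg (by linarith) hM.le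
  -- `θ (a i + c) - a i = c (M - (a i + c)) / M`
  have hscale : ∀ i ∈ s, a i ≤ θ * (a i + c) := fun i hi => by
    rw [div_mul_eq_mul_div, le_div_iff₀ hM]
    nlinarith [hle i hi]
  have hpow : ∑ i ∈ s, a i ^ p ≤ (M - c) ^ p := calc
    ∑ i ∈ s, a i ^ p ≤ ∑ i ∈ s, θ ^ p * (a i + c) ^ p := sum_le_sum fun i hi => by
        rw [← mul_rpow hθ (hac i hi)]
        exact rpow_le_rpow (ha i hi) (hscale i hi) hp.le
    _ = (θ * M) ^ p := by rw [← mul_sum, ← hMp, mul_rpow hθ hM.le]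
    _ = (M - c) ^ p := by rw [div_mul_cancel₀ _ hM.ne']
  have hroot := (rpow_inv_le_iff_of_pos (sum_nonneg fun i hi => rpow_nonneg (ha i hi) p)
    (by linarith) hp).2 hpow
  linarith

/-- `f(x)`: the `p`-norm of the positive part of `b - x`. -/
noncomputable def hingeLpNorm {ι : Type*} [Fintype ι] (b : ι → ℝ) (p x : ℝ) : ℝ :=
  (∑ i, if x ≤ b i then (b i - x) ^ p else 0) ^ (1 / p)

theorem sub_le_hingeLpNorm_sub {ι : Type*} [Fintype ι] {b : ι → ℝ} {p x y : ℝ} (hp : 0 < p)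
    (hxy : x ≤ y) {j : ι} (hyj : y ≤ b j) :
    y - x ≤ hingeLpNorm b p x - hingeLpNorm b p y := by
  set s := univ.filter (y ≤ b ·)
  have hys : ∀ i ∈ s, 0 ≤ b i - y := fun i hi => sub_nonneg.2 (mem_filter.1 hi).2
  have hLp := Real.Lp_add_le_Lp_add_const ⟨j, mem_filter.2 ⟨mem_univ j, hyj⟩⟩ hys
    (sub_nonneg.2 hxy) hp
  have hsub : ∑ i ∈ s, (b i - y + (y - x)) ^ p ≤ ∑ i ∈ univ.filter (x ≤ b ·), (b i - x) ^ p := by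
    simp only [sub_add_sub_cancel]
    refine sum_le_sum_of_subset_of_nonneg (fun i hi => ?_) fun i hi _ => ?_
    · exact mem_filter.2 ⟨mem_univ i, hxy.trans (mem_filter.1 hi).2⟩
    · exact rpow_nonneg (sub_nonneg.2 (mem_filter.1 hi).2) p
  have hroot := rpow_le_rpow (sum_nonneg fun i hi => rpow_nonneg (add_nonneg (hys i hi)
    (sub_nonneg.2 hxy)) p) hsub (one_div_nonneg.2 hp.le)
  simp only [hingeLpNorm, ← sum_filter]
  linarith

theorem abs_sub_le_abs_sub_of_forall_sub_le {s : Set ℝ} {f : ℝ → ℝ}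
    (hf : ∀ x ∈ s, ∀ y ∈ s, x ≤ y → y - x ≤ f x - f y) {x y : ℝ} (hx : x ∈ s) (hy : y ∈ s) :
    |x - y| ≤ |f x - f y| := by
  rcases le_total x y with h | h
  · rw [abs_sub_comm x, abs_of_nonneg (sub_nonneg.2 h)]
    exact (hf x hx y hy h).trans (le_abs_self _)
  · rw [abs_of_nonneg (sub_nonneg.2 h), abs_sub_comm (f x)]
    exact (hf y hy x hx h).trans (le_abs_self _)

/-- For `f(x) = (∑_{i : b_i ≥ x} (b_i - x)^p)^{1/p}` on `[b_A, b_1]`: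
(i) `f(x) - f(y) ≥ y - x` for `x ≤ y` in the interval; (ii) if `|κ - κ̂| ≤ ε` and
`λ, λ̂ ∈ [b_A, b_1]` satisfy `f(λ) = α + γβκ` and `f(λ̂) = α + γβκ̂`, then
`|λ - λ̂| ≤ γβε`. -/
theorem stmt18 (A : ℕ) (hA : 0 < A) (b : Fin A → ℝ)
    (p : ℝ) (hp : 1 ≤ p) :
    (∀ x y : ℝ, x ∈ Set.Icc (b ⟨A - 1, by omega⟩) (b ⟨0, hA⟩) →
      y ∈ Set.Icc (b ⟨A - 1, by omega⟩) (b ⟨0, hA⟩) → x ≤ y →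
      y - x ≤ (∑ i, if x ≤ b i then (b i - x) ^ p else 0) ^ (1 / p) -
        (∑ i, if y ≤ b i then (b i - y) ^ p else 0) ^ (1 / p)) ∧
    (∀ α γ β ε κ κ' lam lam' : ℝ, 0 ≤ α → 0 ≤ γ → γ ≤ 1 → 0 ≤ β → 0 ≤ ε →
      |κ - κ'| ≤ ε →
      lam ∈ Set.Icc (b ⟨A - 1, by omega⟩) (b ⟨0, hA⟩) →
      lam' ∈ Set.Icc (b ⟨A - 1, by omega⟩) (b ⟨0, hA⟩) →
      (∑ i, if lam ≤ b i then (b i - lam) ^ p else 0) ^ (1 / p) = α + γ * β * κ →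
      (∑ i, if lam' ≤ b i then (b i - lam') ^ p else 0) ^ (1 / p) = α + γ * β * κ' →
      |lam - lam'| ≤ γ * β * ε) := by
  have hp0 : 0 < p := by linarith
  have hf : ∀ x ∈ Set.Iic (b ⟨0, hA⟩), ∀ y ∈ Set.Iic (b ⟨0, hA⟩), x ≤ y →
      y - x ≤ hingeLpNorm b p x - hingeLpNorm b p y :=
    fun x _ y hy hxy => sub_le_hingeLpNorm_sub hp0 hxy hy
  refine ⟨fun x y _ hy hxy => hf x (hxy.trans hy.2) y hy.2 hxy, ?_⟩
  intro α γ β ε κ κ' lam lam' _ hγ _ hβ _ hκ hlam hlam' hfl hfl'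
  calc |lam - lam'| ≤ |hingeLpNorm b p lam - hingeLpNorm b p lam'| :=
        abs_sub_le_abs_sub_of_forall_sub_le hf hlam.2 hlam'.2
    _ = γ * β * |κ - κ'| := by
        rw [hingeLpNorm, hingeLpNorm, hfl, hfl', add_sub_add_left_eq_sub, ← mul_sub, abs_mul,
          abs_of_nonneg (by positivity)]
    _ ≤ γ * β * ε := by gcongr
end

section
/- Let S be a finite nonempty set, v ∈ ℝ^S, and r > 0 real. Define h : ℝ → ℝ by h(λ) := ∑_{s∈S} sign(v(s) − λ) · |v(s) − λ|^r, where sign(t) = 1 for t > 0, 0 for t = 0, and −1 for t < 0. Then h is continuous and strictly decreasing, h(min_{s} v(s)) ≥ 0 and h(max_{s} v(s)) ≤ 0; consequently there exists a unique λ ∈ [min_{s} v(s), max_{s} v(s)] with h(λ) = 0. -/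
/-!
The summand `t ↦ sign t * |t| ^ r` is odd and equals `t ^ r` on `[0, ∞)`, hence it is strictly
increasing; it is continuous because it is the difference `(t⁺) ^ r - (t⁻) ^ r`. So `h` is a
continuous strictly decreasing function, nonnegative at `min v` and nonpositive at `max v`
because every summand is, and the intermediate value theorem gives the zero, which is unique by
strict monotonicity.
-/

open Finset Set

namespace Real

lemma sign_mul_abs_rpow_eq_sub {r : ℝ} (hr : r ≠ 0) (t : ℝ) :
    sign t * |t| ^ r = max t 0 ^ r - max (-t) 0 ^ r := by
  rcases lt_trichotomy t 0 with ht | rfl | ht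
  · rw [sign_of_neg ht, abs_of_neg ht, max_eq_right ht.le, max_eq_left (by linarith),
      zero_rpow hr]
    ring
  · simp [zero_rpow hr]
  · rw [sign_of_pos ht, abs_of_pos ht, max_eq_left ht.le, max_eq_right (by linarith),
      zero_rpow hr]
    ring

lemma continuous_sign_mul_abs_rpow {r : ℝ} (hr : 0 < r) :
    Continuous fun t : ℝ => sign t * |t| ^ r := by
  simp_rw [sign_mul_abs_rpow_eq_sub hr.ne']
  exact ((continuous_id.max continuous_const).rpow_const fun _ => Or.inr hr.le).sub
    ((continuous_neg.max continuous_const).rpow_const fun _ => Or.inr hr.le)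

lemma strictMono_sign_mul_abs_rpow {r : ℝ} (hr : 0 < r) :
    StrictMono fun t : ℝ => sign t * |t| ^ r := by
  refine strictMono_of_odd_strictMonoOn_nonneg (fun t => by simp [sign_neg]) ?_
  have eq_rpow : EqOn (fun t : ℝ => sign t * |t| ^ r) (· ^ r) (Ici 0) := by
    intro t (ht : 0 ≤ t)
    rcases ht.eq_or_lt with rfl | ht
    · simp [zero_rpow hr.ne']
    · simp [sign_of_pos ht, abs_of_pos ht]
  exact (strictMonoOn_rpow_Ici_of_exponent_pos hr).congr eq_rpow.symm

end Real

theorem StrictAnti.existsUnique_mem_Icc_eq {α β : Type*} [ConditionallyCompleteLinearOrder α]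
    [TopologicalSpace α] [OrderTopology α] [DenselyOrdered α] [LinearOrder β]
    [TopologicalSpace β] [OrderClosedTopology β] {f : α → β} (hf : StrictAnti f)
    {a b : α} (hab : a ≤ b) (hc : ContinuousOn f (Icc a b)) {y : β} (hya : y ≤ f a)
    (hyb : f b ≤ y) : ∃! x, x ∈ Icc a b ∧ f x = y := by
  obtain ⟨x, hx, hfx⟩ := intermediate_value_Icc' hab hc ⟨hyb, hya⟩
  exact ⟨x, ⟨hx, hfx⟩, fun z hz => hf.injective (hz.2.trans hfx.symm)⟩

/-- For a finite nonempty set `S`, `v : S → ℝ` and real `r > 0`, the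
function `h(λ) = ∑_s sign(v s - λ) |v s - λ|^r` is continuous and strictly
decreasing, `h(min v) ≥ 0`, `h(max v) ≤ 0`, and there is a unique
`λ ∈ [min v, max v]` with `h(λ) = 0`. -/
theorem stmt19 (S : Type*) [Fintype S] [Nonempty S] (v : S → ℝ)
    (r : ℝ) (hr : 0 < r) :
    Continuous (fun lam : ℝ => ∑ s, Real.sign (v s - lam) * |v s - lam| ^ r) ∧
    StrictAnti (fun lam : ℝ => ∑ s, Real.sign (v s - lam) * |v s - lam| ^ r) ∧
    0 ≤ (∑ s, Real.sign (v s - Finset.univ.inf' Finset.univ_nonempty v) *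
        |v s - Finset.univ.inf' Finset.univ_nonempty v| ^ r) ∧
    (∑ s, Real.sign (v s - Finset.univ.sup' Finset.univ_nonempty v) *
        |v s - Finset.univ.sup' Finset.univ_nonempty v| ^ r) ≤ 0 ∧
    ∃! lam : ℝ,
      lam ∈ Set.Icc (Finset.univ.inf' Finset.univ_nonempty v)
        (Finset.univ.sup' Finset.univ_nonempty v) ∧
      (∑ s, Real.sign (v s - lam) * |v s - lam| ^ r) = 0 := by
  set g : ℝ → ℝ := fun t => Real.sign t * |t| ^ r
  have hg : StrictMono g := Real.strictMono_sign_mul_abs_rpow hr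
  have hg0 : g 0 = 0 := by simp [g]
  have hcont : Continuous fun lam => ∑ s, g (v s - lam) :=
    continuous_finsetSum _ fun _ _ =>
      (Real.continuous_sign_mul_abs_rpow hr).comp (continuous_const.sub continuous_id)
  have hanti : StrictAnti fun lam => ∑ s, g (v s - lam) := fun a b hab =>
    sum_lt_sum_of_nonempty univ_nonempty fun _ _ => hg (by linarith)
  have hmin : 0 ≤ ∑ s, g (v s - univ.inf' univ_nonempty v) :=
    sum_nonneg fun s _ => hg0 ▸ hg.monotone (sub_nonneg.2 (inf'_le v (mem_univ s)))
  have hmax : ∑ s, g (v s - univ.sup' univ_nonempty v) ≤ 0 :=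
    sum_nonpos fun s _ => hg0 ▸ hg.monotone (sub_nonpos.2 (le_sup' v (mem_univ s)))
  obtain ⟨s⟩ := ‹Nonempty S›
  exact ⟨hcont, hanti, hmin, hmax, hanti.existsUnique_mem_Icc_eq
    ((inf'_le v (mem_univ s)).trans (le_sup' v (mem_univ s))) hcont.continuousOn hmin hmax⟩
end
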